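/- Let q = r^2 with r an odd prime power. Suppose q − 1 = e_1 f_1 = e_2 f_2, there exists an integer l ≥ 2 with e_1 ≡ 2^l (mod 2^{l+1}) and 2^l | e_2, and that 2e_2 | e_1(r−1) and e_1 | e_2(r+1). Let s, t be integers with 1 ≤ s ≤ D_1, 1 ≤ t ≤ D_2 and 4 | (s−1)(r+1), and set n_1 = s·f_1 + t·f_2. If n_1 is even, then there exists an MDS self-dual code over F_q of length n_1 + 2, i.e., a linear code C ⊆ F_q^{n_1+2} with C = C⊥, dim C = (n_1+2)/2, and minimum Hamming distance (n_1+2)/2 + 1. -/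

import Mathlib

/-- The Euclidean dual of a linear code `C ⊆ F^n`. -/
def dualCode {F : Type*} [Field F] {n : ℕ} (C : Submodule F (Fin n → F)) :
    Submodule F (Fin n → F) where
  carrier := {x | ∀ c ∈ C, ∑ i, x i * c i = 0}
  add_mem' := by
    intro a b ha hb c hc
    simp only [Set.mem_setOf_eq] at ha hb ⊢
    simp [Pi.add_apply, add_mul, Finset.sum_add_distrib, ha c hc, hb c hc]
  zero_mem' := by intro c hc; simp
  smul_mem' := by
    intro r a ha c hc
    simp only [Set.mem_setOf_eq] at ha ⊢
    simp [Pi.smul_apply, smul_eq_mul, mul_assoc, ← Finset.mul_sum, ha c hc]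

/-- `C` has minimum Hamming distance `d`. -/
def IsMinDist {F : Type*} [Field F] [DecidableEq F] {n : ℕ}
    (C : Submodule F (Fin n → F)) (d : ℕ) : Prop :=
  (∀ c ∈ C, c ≠ 0 → d ≤ hammingNorm c) ∧ ∃ c ∈ C, c ≠ 0 ∧ hammingNorm c = d

namespace MDSAux

variable {F : Type*} [Field F] {ι : Type*} [Fintype ι] [DecidableEq ι]

/-- Euclidean dual over an arbitrary finite index type. -/
def dualCode' (C : Submodule F (ι → F)) : Submodule F (ι → F) where
  carrier := {x | ∀ c ∈ C, ∑ i, x i * c i = 0}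
  add_mem' := by
    intro a b ha hb c hc
    simp only [Set.mem_setOf_eq] at ha hb ⊢
    simp [Pi.add_apply, add_mul, Finset.sum_add_distrib, ha c hc, hb c hc]
  zero_mem' := by intro c hc; simp
  smul_mem' := by
    intro r a ha c hc
    simp only [Set.mem_setOf_eq] at ha ⊢
    simp [Pi.smul_apply, smul_eq_mul, mul_assoc, ← Finset.mul_sum, ha c hc]

lemma mem_dualCode' {C : Submodule F (ι → F)} {x : ι → F} :
    x ∈ dualCode' C ↔ ∀ c ∈ C, ∑ i, x i * c i = 0 := Iff.rfl

lemma dualCode_eq {n : ℕ} (C : Submodule F (Fin n → F)) : dualCode C = dualCode' C := rfl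

/-- The pairing map into the dual of `C`. -/
noncomputable def pairingMap (C : Submodule F (ι → F)) : (ι → F) →ₗ[F] Module.Dual F C where
  toFun x :=
    { toFun := fun c => ∑ i, x i * (c : ι → F) i
      map_add' := by
        intro a b
        simp [Submodule.coe_add, Pi.add_apply, mul_add, Finset.sum_add_distrib]
      map_smul' := by
        intro m a
        simp [Finset.mul_sum, mul_left_comm] }
  map_add' := by
    intro x y; ext c
    simp [Pi.add_apply, add_mul, Finset.sum_add_distrib]
  map_smul' := by
    intro m x; ext c
    simp [Finset.mul_sum, mul_assoc]

lemma ker_pairingMap (C : Submodule F (ι → F)) :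
    LinearMap.ker (pairingMap C) = dualCode' C := by
  ext x
  constructor
  · intro hx c hc
    have := LinearMap.congr_fun (LinearMap.mem_ker.mp hx) ⟨c, hc⟩
    simpa [pairingMap] using this
  · intro hx
    rw [LinearMap.mem_ker]
    ext c
    simpa [pairingMap] using hx c c.2

lemma surjective_pairingMap (C : Submodule F (ι → F)) :
    Function.Surjective (pairingMap C) := by
  intro φ
  obtain ⟨q, hq⟩ := Submodule.exists_isCompl C
  let π := Submodule.linearProjOfIsCompl C q hq
  let ψ : (ι → F) →ₗ[F] F := φ.comp π
  refine ⟨fun i => ψ (Pi.single i 1), ?_⟩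
  ext c
  have hc : (c : ι → F) = ∑ i, (c : ι → F) i • (Pi.single i 1 : ι → F) := by
    ext j
    rw [Finset.sum_apply]
    simp [Pi.single_apply, eq_comm]
  have : ∑ i, ψ (Pi.single i 1) * (c : ι → F) i = ψ (c : ι → F) := by
    conv_rhs => rw [hc]
    rw [map_sum]
    refine Finset.sum_congr rfl fun i _ => ?_
    rw [map_smul]
    simp [mul_comm]
  simp only [pairingMap, LinearMap.coe_mk, AddHom.coe_mk]
  rw [this]
  show φ (π (c : ι → F)) = φ c
  congr 1
  exact Submodule.linearProjOfIsCompl_apply_left hq c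

lemma finrank_dualCode'_add (C : Submodule F (ι → F)) :
    Module.finrank F (dualCode' C) + Module.finrank F C = Fintype.card ι := by
  have h1 := LinearMap.finrank_range_add_finrank_ker (pairingMap C)
  rw [ker_pairingMap] at h1
  have h2 : LinearMap.range (pairingMap C) = ⊤ :=
    LinearMap.range_eq_top.mpr (surjective_pairingMap C)
  rw [h2] at h1
  have h3 : Module.finrank F (⊤ : Submodule F (Module.Dual F C)) = Module.finrank F C := by
    rw [finrank_top]
    exact Subspace.dual_finrank_eq
  rw [h3] at h1
  have h4 : Module.finrank F (ι → F) = Fintype.card ι := Module.finrank_fintype_fun_eq_card F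
  omega

lemma dualCode'_eq_self (C : Submodule F (ι → F)) (hle : C ≤ dualCode' C)
    (hr : 2 * Module.finrank F C = Fintype.card ι) : dualCode' C = C := by
  have h := finrank_dualCode'_add C
  exact (Submodule.eq_of_le_of_finrank_le hle (by omega)).symm

end MDSAux

namespace MDSAux
open Polynomial Finset

variable {F : Type*} [Field F] [DecidableEq F] {κ : Type*} [Fintype κ] [DecidableEq κ]

noncomputable def uCoef (a : κ → F) (i : κ) : F := (∏ j ∈ univ.erase i, (a i - a j))⁻¹

lemma natDegree_le_of_mem_degreeLT {k : ℕ} (hk : 1 ≤ k) {f : F[X]} (hf : f ∈ degreeLT F k) :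
    f.natDegree ≤ k - 1 := by
  rcases eq_or_ne f 0 with rfl | hf0
  · simp
  · rw [mem_degreeLT] at hf
    have := (Polynomial.natDegree_lt_iff_degree_lt hf0).mpr hf
    omega

/-- The key Lagrange identity: `∑ uᵢ h(aᵢ)` is the top coefficient of `h`. -/
lemma sum_uCoef_eval (a : κ → F) (ha : Function.Injective a) (h : F[X])
    (hdeg : h.degree < Fintype.card κ) :
    ∑ i, uCoef a i * h.eval (a i) = h.coeff (Fintype.card κ - 1) := by
  have hcard : (univ : Finset κ).card = Fintype.card κ := rfl
  have hinj : Set.InjOn a (univ : Finset κ) := fun x _ y _ hxy => ha hxy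
  have hinterp : h = (Lagrange.interpolate univ a) fun i => h.eval (a i) :=
    Lagrange.eq_interpolate hinj (by rwa [hcard])
  conv_rhs => rw [hinterp]
  rw [Lagrange.interpolate_apply, Polynomial.finset_sum_coeff]
  refine Finset.sum_congr rfl fun i _ => ?_
  rw [Polynomial.coeff_C_mul]
  have hb : (Lagrange.basis univ a i).coeff (Fintype.card κ - 1)
      = (Lagrange.basis univ a i).leadingCoeff := by
    rw [Polynomial.leadingCoeff, Lagrange.natDegree_basis hinj (mem_univ i), hcard]
  rw [hb]
  have hlc : (Lagrange.basis univ a i).leadingCoeff = ∏ j ∈ univ.erase i, (a i - a j)⁻¹ := by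
    rw [Lagrange.basis, Polynomial.leadingCoeff_prod]
    refine Finset.prod_congr rfl fun j hj => ?_
    have hij : a i ≠ a j := fun hh => (Finset.ne_of_mem_erase hj) (ha hh).symm
    rw [Lagrange.basisDivisor, Polynomial.leadingCoeff_mul, Polynomial.leadingCoeff_C,
      Polynomial.leadingCoeff_X_sub_C, mul_one]
  rw [hlc, uCoef, ← Finset.prod_inv_distrib, mul_comm]

variable (a v : κ → F) (k : ℕ)

/-- The extended GRS encoding map. -/
noncomputable def grsMap : degreeLT F k →ₗ[F] (Option κ → F) where
  toFun f o := o.elim ((f : F[X]).coeff (k - 1)) (fun i => v i * (f : F[X]).eval (a i))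
  map_add' f g := by
    funext o
    cases o <;> simp [mul_add]
  map_smul' c f := by
    funext o
    cases o <;> simp [mul_left_comm, smul_eq_mul]

lemma grsMap_none (f : degreeLT F k) : grsMap a v k f none = (f : F[X]).coeff (k - 1) := rfl
lemma grsMap_some (f : degreeLT F k) (i : κ) :
    grsMap a v k f (some i) = v i * (f : F[X]).eval (a i) := rfl

end MDSAux

namespace MDSAux
open Polynomial Finset
set_option linter.unusedSectionVars false

variable {F : Type*} [Field F] [DecidableEq F] {κ : Type*} [Fintype κ] [DecidableEq κ]
variable (a v : κ → F) (k : ℕ)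

lemma grsMap_injective (ha : Function.Injective a) (hv0 : ∀ i, v i ≠ 0)
    (hk1 : 1 ≤ k) (hcard : k ≤ Fintype.card κ) :
    Function.Injective (grsMap a v k) := by
  rw [injective_iff_map_eq_zero]
  intro f hf
  have heval : ∀ i, (f : F[X]).eval (a i) = 0 := by
    intro i
    have := congr_fun hf (some i)
    rw [grsMap_some] at this
    simpa [hv0 i] using this
  have hz : (f : F[X]) = 0 := by
    rcases eq_or_ne (f : F[X]) 0 with h0 | h0
    · exact h0
    · refine Polynomial.eq_zero_of_natDegree_lt_card_of_eval_eq_zero _ ha heval ?_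
      have := natDegree_le_of_mem_degreeLT hk1 f.2
      omega
  exact Subtype.ext hz

lemma finrank_grs (ha : Function.Injective a) (hv0 : ∀ i, v i ≠ 0)
    (hk1 : 1 ≤ k) (hcard : k ≤ Fintype.card κ) :
    Module.finrank F (LinearMap.range (grsMap a v k)) = k := by
  rw [LinearMap.finrank_range_of_inj (grsMap_injective a v k ha hv0 hk1 hcard)]
  have : Module.finrank F (degreeLT F k) = Module.finrank F (Fin k → F) :=
    (Polynomial.degreeLTEquiv F k).finrank_eq
  rw [this, Module.finrank_fintype_fun_eq_card, Fintype.card_fin]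

lemma coeff_mul_top {f g : F[X]} (hk1 : 1 ≤ k) (hf : f ∈ degreeLT F k) (hg : g ∈ degreeLT F k) :
    (f * g).coeff (2 * k - 2) = f.coeff (k - 1) * g.coeff (k - 1) := by
  rw [Polynomial.coeff_mul]
  refine Finset.sum_eq_single_of_mem (k - 1, k - 1) ?_ ?_
  · rw [Finset.HasAntidiagonal.mem_antidiagonal]; omega
  · rintro ⟨p, q⟩ hmem hne
    rw [Finset.HasAntidiagonal.mem_antidiagonal] at hmem
    simp only at hmem
    rcases le_or_gt k p with hp | hp
    · have : f.coeff p = 0 := by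
        refine Polynomial.coeff_eq_zero_of_degree_lt ?_
        exact lt_of_lt_of_le (mem_degreeLT.mp hf) (by exact_mod_cast hp)
      rw [this, zero_mul]
    · have hq : k ≤ q := by
        rcases eq_or_ne p (k-1) with rfl | hpk
        · exfalso; apply hne; simp; omega
        · omega
      have : g.coeff q = 0 := by
        refine Polynomial.coeff_eq_zero_of_degree_lt ?_
        exact lt_of_lt_of_le (mem_degreeLT.mp hg) (by exact_mod_cast hq)
      rw [this, mul_zero]

lemma grs_le_dual (ha : Function.Injective a) (hk1 : 1 ≤ k)
    (hcard : Fintype.card κ + 1 = 2 * k)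
    (hvsq : ∀ i, v i * v i = - uCoef a i) :
    LinearMap.range (grsMap a v k) ≤ dualCode' (LinearMap.range (grsMap a v k)) := by
  rintro x ⟨f, rfl⟩ c ⟨g, rfl⟩
  rw [Fintype.sum_option]
  have hterm : ∀ i : κ, grsMap a v k f (some i) * grsMap a v k g (some i)
      = - (uCoef a i * (↑f * ↑g : F[X]).eval (a i)) := by
    intro i
    rw [grsMap_some, grsMap_some, Polynomial.eval_mul]
    calc v i * (↑f : F[X]).eval (a i) * (v i * (↑g : F[X]).eval (a i))
        = (v i * v i) * ((↑f : F[X]).eval (a i) * (↑g : F[X]).eval (a i)) := by ring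
      _ = - uCoef a i * ((↑f : F[X]).eval (a i) * (↑g : F[X]).eval (a i)) := by rw [hvsq i]
      _ = - (uCoef a i * ((↑f : F[X]).eval (a i) * (↑g : F[X]).eval (a i))) := by ring
  rw [Finset.sum_congr rfl fun i _ => hterm i, Finset.sum_neg_distrib]
  have hdeg : ((↑f : F[X]) * ↑g).degree < (Fintype.card κ : ℕ) := by
    have hf := natDegree_le_of_mem_degreeLT hk1 f.2
    have hg := natDegree_le_of_mem_degreeLT hk1 g.2
    calc ((↑f : F[X]) * ↑g).degree ≤ (((↑f : F[X]) * ↑g).natDegree : WithBot ℕ) :=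
          Polynomial.degree_le_natDegree
      _ ≤ ((2 * k - 2 : ℕ) : WithBot ℕ) := by
          exact_mod_cast le_trans (Polynomial.natDegree_mul_le) (by omega)
      _ < (Fintype.card κ : ℕ) := by exact_mod_cast (by omega : 2 * k - 2 < Fintype.card κ)
  rw [sum_uCoef_eval a ha _ hdeg]
  have : ((↑f : F[X]) * ↑g).coeff (Fintype.card κ - 1) =
      (↑f : F[X]).coeff (k - 1) * (↑g : F[X]).coeff (k - 1) := by
    have := coeff_mul_top k hk1 f.2 g.2
    have hc : Fintype.card κ - 1 = 2 * k - 2 := by omega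
    rw [hc, this]
  rw [this, grsMap_none, grsMap_none]
  ring

end MDSAux

namespace MDSAux
open Polynomial Finset
set_option linter.unusedSectionVars false

variable {F : Type*} [Field F] [DecidableEq F] {κ : Type*} [Fintype κ] [DecidableEq κ]
variable (a v : κ → F) (k : ℕ)

lemma hammingNorm_option (c : Option κ → F) :
    hammingNorm c = (if c none ≠ 0 then 1 else 0)
      + (univ.filter fun i : κ => c (some i) ≠ 0).card := by
  show (univ.filter fun o : Option κ => c o ≠ 0).card = _
  rw [Finset.card_filter, Fintype.sum_option, Finset.card_filter]

lemma uCoef_ne_zero (ha : Function.Injective a) (i : κ) : uCoef a i ≠ 0 := by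
  rw [uCoef]
  apply inv_ne_zero
  rw [Finset.prod_ne_zero_iff]
  intro j hj
  exact sub_ne_zero.mpr fun h => (Finset.ne_of_mem_erase hj) (ha h).symm

lemma card_roots_filter (ha : Function.Injective a) {f : F[X]} (hf0 : f ≠ 0) :
    (univ.filter fun i : κ => f.eval (a i) = 0).card ≤ f.natDegree := by
  have h1 : (univ.filter fun i : κ => f.eval (a i) = 0).card ≤ f.roots.toFinset.card := by
    apply Finset.card_le_card_of_injOn a
    · intro i hi
      rw [Finset.mem_coe, Finset.mem_filter] at hi
      rw [Finset.mem_coe, Multiset.mem_toFinset, Polynomial.mem_roots hf0]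
      exact hi.2
    · exact fun x _ y _ hxy => ha hxy
  exact le_trans h1 (le_trans f.roots.toFinset_card_le (Polynomial.card_roots' f))

lemma grs_min_dist_lower (ha : Function.Injective a) (hv0 : ∀ i, v i ≠ 0) (hk1 : 1 ≤ k)
    (hcard : Fintype.card κ + 1 = 2 * k) :
    ∀ c ∈ LinearMap.range (grsMap a v k), c ≠ 0 → k + 1 ≤ hammingNorm c := by
  rintro c ⟨f, rfl⟩ hc0
  have hf0 : (f : F[X]) ≠ 0 := by
    intro h
    exact hc0 (by rw [show f = 0 from Subtype.ext h, map_zero])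
  set Z : Finset κ := univ.filter (fun i : κ => (f : F[X]).eval (a i) = 0) with hZdef
  have hZ : Z.card ≤ (f : F[X]).natDegree := card_roots_filter a ha hf0
  have hnd := natDegree_le_of_mem_degreeLT hk1 f.2
  have hfc : (univ.filter fun i : κ => grsMap a v k f (some i) ≠ 0).card + Z.card
      = Fintype.card κ := by
    have heq : (univ.filter fun i : κ => grsMap a v k f (some i) ≠ 0)
        = univ \ Z := by
      rw [hZdef]
      ext i
      simp [grsMap_some, mul_eq_zero, hv0 i]
    rw [heq]
    rw [Finset.card_sdiff_add_card_eq_card (by rw [hZdef]; exact Finset.filter_subset _ _)]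
    rfl
  rw [hammingNorm_option]
  rcases eq_or_ne ((f : F[X]).coeff (k - 1)) 0 with hc | hc
  · -- top coefficient zero: natDegree ≤ k - 2
    have hdle : (f : F[X]).natDegree ≤ k - 2 := by
      rcases eq_or_ne ((f : F[X]).natDegree) (k - 1) with he | he
      · exfalso
        apply hf0
        have : (f : F[X]).leadingCoeff = 0 := by rw [Polynomial.leadingCoeff, he]; exact hc
        exact Polynomial.leadingCoeff_eq_zero.mp this
      · omega
    have h1 : Z.card ≤ k - 2 := le_trans hZ hdle
    have hk2 : 2 ≤ k := by
      by_contra hcon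
      apply hf0
      have hke : k = 1 := by omega
      have hC : (f : F[X]) = C ((f : F[X]).coeff 0) :=
        Polynomial.eq_C_of_natDegree_le_zero (by omega)
      rw [hC]
      have : (f : F[X]).coeff 0 = 0 := by
        have h' := hc
        rwa [show k - 1 = 0 from by omega] at h'
      rw [this, map_zero]
    omega
  · have hnone : grsMap a v k f none ≠ 0 := by rw [grsMap_none]; exact hc
    rw [if_pos hnone]
    have h1 : Z.card ≤ k - 1 := le_trans hZ hnd
    omega

lemma grs_min_dist_witness (ha : Function.Injective a) (hv0 : ∀ i, v i ≠ 0) (hk1 : 1 ≤ k)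
    (hcard : Fintype.card κ + 1 = 2 * k) :
    ∃ c ∈ LinearMap.range (grsMap a v k), c ≠ 0 ∧ hammingNorm c = k + 1 := by
  obtain ⟨T, -, hT⟩ := Finset.exists_subset_card_eq (s := (univ : Finset κ)) (n := k - 1) (by
      have : (univ : Finset κ).card = Fintype.card κ := rfl
      omega)
  set f0 : F[X] := ∏ i ∈ T, (X - C (a i)) with hf0def
  have hmonic : f0.Monic := monic_prod_of_monic _ _ fun i _ => monic_X_sub_C (a i)
  have hnd : f0.natDegree = k - 1 := by
    rw [hf0def, Polynomial.natDegree_prod_of_monic _ _ fun i _ => monic_X_sub_C (a i)]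
    simp [Polynomial.natDegree_X_sub_C, hT]
  have hmem : f0 ∈ degreeLT F k := by
    rw [mem_degreeLT, Polynomial.degree_eq_natDegree hmonic.ne_zero, hnd]
    exact_mod_cast Nat.sub_lt_of_pos_le one_pos hk1
  have hcoeff : f0.coeff (k - 1) = 1 := by
    have := hmonic.coeff_natDegree
    rwa [hnd] at this
  refine ⟨grsMap a v k ⟨f0, hmem⟩, ⟨⟨f0, hmem⟩, rfl⟩, ?_, ?_⟩
  · intro h
    have := congr_fun h none
    rw [grsMap_none] at this
    simp only [Pi.zero_apply] at this
    rw [hcoeff] at this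
    exact one_ne_zero this
  · rw [hammingNorm_option]
    have hnone : grsMap a v k ⟨f0, hmem⟩ none ≠ 0 := by
      rw [grsMap_none]
      simp only
      rw [hcoeff]
      exact one_ne_zero
    rw [if_pos hnone]
    have heval : ∀ i : κ, f0.eval (a i) = 0 ↔ i ∈ T := by
      intro i
      rw [hf0def, Polynomial.eval_prod]
      simp only [Polynomial.eval_sub, Polynomial.eval_X, Polynomial.eval_C]
      rw [Finset.prod_eq_zero_iff]
      constructor
      · rintro ⟨j, hj, hij⟩
        rw [sub_eq_zero] at hij
        rwa [ha hij]
      · intro hi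
        exact ⟨i, hi, sub_self _⟩
    have hfil : (univ.filter fun i : κ => grsMap a v k ⟨f0, hmem⟩ (some i) ≠ 0)
        = univ \ T := by
      ext i
      rw [Finset.mem_filter, Finset.mem_sdiff, grsMap_some]
      simp only [mem_univ, true_and]
      constructor
      · intro h hiT
        exact h (by rw [(heval i).mpr hiT, mul_zero])
      · intro hiT h
        rcases mul_eq_zero.mp h with h | h
        · exact hv0 i h
        · exact hiT ((heval i).mp h)
    rw [hfil, Finset.card_sdiff_of_subset (Finset.subset_univ T), hT]
    have : (univ : Finset κ).card = Fintype.card κ := rfl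
    omega

theorem grs_construction (a : κ → F) (ha : Function.Injective a) (k : ℕ)
    (hk1 : 1 ≤ k) (hcard : Fintype.card κ + 1 = 2 * k)
    (hsq : ∀ i, IsSquare (- uCoef a i)) :
    ∃ C : Submodule F (Option κ → F), dualCode' C = C ∧ Module.finrank F C = k ∧
      (∀ c ∈ C, c ≠ 0 → k + 1 ≤ hammingNorm c) ∧ ∃ c ∈ C, c ≠ 0 ∧ hammingNorm c = k + 1 := by
  have hv : ∀ i : κ, ∃ w : F, w * w = - uCoef a i := by
    intro i
    obtain ⟨w, hw⟩ := hsq i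
    exact ⟨w, hw.symm⟩
  choose v hvsq using hv
  have hv0 : ∀ i, v i ≠ 0 := by
    intro i h
    have := hvsq i
    rw [h, mul_zero] at this
    exact uCoef_ne_zero a ha i (by
      have := this.symm
      rwa [neg_eq_zero] at this)
  have hkcard : k ≤ Fintype.card κ := by omega
  refine ⟨LinearMap.range (grsMap a v k), ?_, ?_, ?_, ?_⟩
  · apply dualCode'_eq_self
    · exact grs_le_dual a v k ha hk1 hcard hvsq
    · rw [finrank_grs a v k ha hv0 hk1 hkcard, Fintype.card_option]
      omega
  · exact finrank_grs a v k ha hv0 hk1 hkcard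
  · exact grs_min_dist_lower a v k ha hv0 hk1 hcard
  · exact grs_min_dist_witness a v k ha hv0 hk1 hcard

end MDSAux

namespace MDSAux
open Polynomial Finset
set_option linter.unusedSectionVars false

lemma int_eq_zero_of_dvd_of_abs_lt {d k : ℤ} (hdvd : d ∣ k) (hlt : |k| < d) : k = 0 := by
  by_contra hk
  have h1 : d ≤ |k| := Int.le_of_dvd (abs_pos.mpr hk) ((dvd_abs _ _).mpr hdvd)
  omega

section FieldLemmas

variable {F : Type*} [Field F] [Fintype F] [DecidableEq F]
variable {r : ℕ}

lemma exists_frob (hr : IsPrimePow r) (hF : Fintype.card F = r ^ 2) :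
    ∃ σ : F →+* F, ∀ x : F, σ x = x ^ r := by
  obtain ⟨p, m, hp, hm, rfl⟩ := hr
  have hp' : p.Prime := hp.nat_prime
  set c := ringChar F with hc
  have hcp : CharP F c := ringChar.charP F
  have hcprime : c.Prime := CharP.char_is_prime F c
  obtain ⟨n, -, hcard⟩ := FiniteField.card F c
  have hpc : p = c := by
    have h1 : p ∣ c ^ (n : ℕ) := by
      rw [← hcard, hF]
      exact dvd_pow (dvd_pow_self p hm.ne') two_ne_zero
    exact (Nat.prime_dvd_prime_iff_eq hp' hcprime).mp (hp'.dvd_of_dvd_pow h1)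
  haveI : ExpChar F c := ExpChar.prime hcprime
  refine ⟨iterateFrobenius F c m, fun x => ?_⟩
  rw [iterateFrobenius_def, hpc]

variable (hr3 : 3 ≤ r) (hrodd : Odd r) (hF : Fintype.card F = r ^ 2)

include hr3 hrodd hF in
lemma card_div_two_eq : Fintype.card F / 2 = (r - 1) * ((r + 1) / 2) := by
  obtain ⟨u, hu⟩ := hrodd
  rw [hF]
  have : r ^ 2 = 2 * (2 * u * u + 2 * u) + 1 := by rw [hu]; ring
  rw [this]
  have h1 : r - 1 = 2 * u := by omega
  have h2 : (r + 1) / 2 = u + 1 := by omega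
  have h3 : (2 * (2 * u * u + 2 * u) + 1) / 2 = 2 * u * u + 2 * u := by omega
  rw [h1, h2, h3]
  ring

include hr3 hrodd hF in
lemma even_card_div_two : Even (Fintype.card F / 2) := by
  obtain ⟨u, hu⟩ := hrodd
  rw [hF]
  have : r ^ 2 = 2 * (2 * (u * u + u)) + 1 := by rw [hu]; ring
  rw [this]
  refine ⟨u * u + u, by omega⟩

include hr3 hrodd hF in
lemma char_ne_two : ringChar F ≠ 2 := by
  intro h2
  have hcp : CharP F (ringChar F) := ringChar.charP F
  obtain ⟨n, -, hcard⟩ := FiniteField.card F (ringChar F)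
  rw [h2, hF] at hcard
  obtain ⟨u, hu⟩ := hrodd
  have : r ^ 2 = 2 * (2 * u * u + 2 * u) + 1 := by rw [hu]; ring
  have h2n : 2 ∣ 2 ^ (n : ℕ) := dvd_pow_self 2 n.2.ne'
  omega

include hr3 hrodd hF in
lemma isSquare_neg_one' : IsSquare (-1 : F) := by
  rw [FiniteField.isSquare_neg_one_iff, hF]
  obtain ⟨u, hu⟩ := hrodd
  have : r ^ 2 = 4 * (u * u + u) + 1 := by rw [hu]; ring
  omega

include hr3 hrodd hF in
lemma isSquare_of_rpow (x : F) (hx : x ^ (r - 1) = 1) : IsSquare x := by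
  have hx0 : x ≠ 0 := by
    intro h
    rw [h, zero_pow (by omega)] at hx
    exact zero_ne_one hx
  rw [FiniteField.isSquare_iff (char_ne_two hr3 hrodd hF) hx0,
    card_div_two_eq hr3 hrodd hF, pow_mul, hx, one_pow]

include hr3 hrodd hF in
lemma pow_card_div_two_of_isSquare {x : F} (hx0 : x ≠ 0) (hx : IsSquare x) :
    x ^ (Fintype.card F / 2) = 1 :=
  (FiniteField.isSquare_iff (char_ne_two hr3 hrodd hF) hx0).mp hx

include hr3 hrodd hF in
lemma isSquare_sub_of_fixed (σ : F →+* F) (hσ : ∀ x : F, σ x = x ^ r)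
    {x y : F} (hx : x ^ r = x) (hy : y ^ r = y) (hxy : x ≠ y) : IsSquare (x - y) := by
  apply isSquare_of_rpow hr3 hrodd hF
  have hfix : (x - y) ^ r = x - y := by
    rw [← hσ, map_sub, hσ, hσ, hx, hy]
  have hne : x - y ≠ 0 := sub_ne_zero.mpr hxy
  have : (x - y) ^ (r - 1) * (x - y) = 1 * (x - y) := by
    rw [← pow_succ, one_mul]
    have : r - 1 + 1 = r := by omega
    rw [this, hfix]
  exact mul_right_cancel₀ hne this

include hr3 hrodd hF in
lemma isSquare_natCast (σ : F →+* F) (hσ : ∀ x : F, σ x = x ^ r)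
    (n : ℕ) (hn : (n : F) ≠ 0) : IsSquare ((n : F)) := by
  apply isSquare_of_rpow hr3 hrodd hF
  have hfix : ((n : F)) ^ r = (n : F) := by rw [← hσ, map_natCast]
  have : ((n : F)) ^ (r - 1) * (n : F) = 1 * (n : F) := by
    rw [← pow_succ, one_mul, show r - 1 + 1 = r by omega, hfix]
  exact mul_right_cancel₀ hn this

include hr3 hrodd hF in
/-- For `z` on the "norm-one circle", `(1+z)^(q/2) = (z^((r+1)/2))⁻¹`. -/
lemma one_add_circle_pow (σ : F →+* F) (hσ : ∀ x : F, σ x = x ^ r)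
    {z : F} (hz : z ^ (r + 1) = 1) (h1z : 1 + z ≠ 0) :
    (1 + z) ^ (Fintype.card F / 2) = (z ^ ((r + 1) / 2))⁻¹ := by
  have hz0 : z ≠ 0 := by
    intro h; rw [h, zero_pow (by omega)] at hz; exact zero_ne_one hz
  have hzr : z ^ r = z⁻¹ := by
    field_simp
    rw [← pow_succ, hz]
  have hstep : (1 + z) ^ r = z⁻¹ * (1 + z) := by
    rw [← hσ, map_add, map_one, hσ, hzr]
    field_simp
    ring
  have hr1 : (1 + z) ^ (r - 1) = z⁻¹ := by
    have h : (1 + z) ^ (r - 1) * (1 + z) = z⁻¹ * (1 + z) := by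
      rw [← pow_succ, show r - 1 + 1 = r by omega, hstep]
    exact mul_right_cancel₀ h1z h
  rw [card_div_two_eq hr3 hrodd hF, pow_mul, hr1, inv_pow]

end FieldLemmas
end MDSAux

namespace MDSAux
open Polynomial Finset
set_option linter.unusedSectionVars false

section FieldLemmas2

variable {F : Type*} [Field F] [Fintype F] [DecidableEq F]
variable {r : ℕ} (hr3 : 3 ≤ r) (hrodd : Odd r) (hF : Fintype.card F = r ^ 2)

include hr3 hrodd hF in
lemma neg_one_pow_inv (j : ℕ) : ((-1 : F) ^ j)⁻¹ = (-1 : F) ^ j := by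
  refine inv_eq_of_mul_eq_one_right ?_
  rw [← mul_pow]
  norm_num

include hr3 hrodd hF in
lemma circle_sum_pow (σ : F →+* F) (hσ : ∀ x : F, σ x = x ^ r)
    {δ : F} (hδ : δ ^ ((r + 1) / 2) = 1) {n m : ℕ} (hne : δ ^ n + δ ^ m ≠ 0) :
    (δ ^ n + δ ^ m) ^ (Fintype.card F / 2) = 1 := by
  have hδ0 : δ ≠ 0 := by
    intro h; rw [h, zero_pow (by omega)] at hδ; exact zero_ne_one hδ
  have hδm0 : δ ^ m ≠ 0 := pow_ne_zero _ hδ0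
  set z := δ ^ n * (δ ^ m)⁻¹ with hzdef
  have hfac : δ ^ n + δ ^ m = δ ^ m * (1 + z) := by
    rw [hzdef]; field_simp; ring
  have hzhalf : z ^ ((r + 1) / 2) = 1 := by
    rw [hzdef, mul_pow, ← pow_mul, mul_comm n _, pow_mul, hδ, one_pow, inv_pow, ← pow_mul,
      mul_comm m _, pow_mul, hδ, one_pow, inv_one, mul_one]
  have hzr1 : z ^ (r + 1) = 1 := by
    have h2 : (r + 1) / 2 * 2 = r + 1 := by
      obtain ⟨u, hu⟩ := hrodd; omega
    rw [← h2, pow_mul, hzhalf, one_pow]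
  have h1z : 1 + z ≠ 0 := by
    intro h
    apply hne
    rw [hfac, h, mul_zero]
  rw [hfac, mul_pow, one_add_circle_pow hr3 hrodd hF σ hσ hzr1 h1z, hzhalf, inv_one, mul_one]
  have hδq : δ ^ (Fintype.card F / 2) = 1 := by
    rw [card_div_two_eq hr3 hrodd hF, mul_comm, pow_mul, hδ, one_pow]
  rw [← pow_mul, mul_comm m _, pow_mul, hδq, one_pow]

include hr3 hrodd hF in
lemma circle_diff_pow (σ : F →+* F) (hσ : ∀ x : F, σ x = x ^ r)
    {δ : F} (hδ : δ ^ ((r + 1) / 2) = 1) {n m : ℕ} (hne : δ ^ n ≠ δ ^ m) :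
    (δ ^ n - δ ^ m) ^ (Fintype.card F / 2) = (-1) ^ ((r + 1) / 2) := by
  have hδ0 : δ ≠ 0 := by
    intro h; rw [h, zero_pow (by omega)] at hδ; exact zero_ne_one hδ
  have hδm0 : δ ^ m ≠ 0 := pow_ne_zero _ hδ0
  set z := -(δ ^ n * (δ ^ m)⁻¹) with hzdef
  have hfac : δ ^ n - δ ^ m = (-δ ^ m) * (1 + z) := by
    rw [hzdef]; field_simp; ring
  have haux : (δ ^ n * (δ ^ m)⁻¹) ^ ((r + 1) / 2) = 1 := by
    rw [mul_pow, ← pow_mul, mul_comm n _, pow_mul, hδ, one_pow, inv_pow, ← pow_mul,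
      mul_comm m _, pow_mul, hδ, one_pow, inv_one, mul_one]
  have hzhalf : z ^ ((r + 1) / 2) = (-1) ^ ((r + 1) / 2) := by
    rw [hzdef, neg_eq_neg_one_mul, mul_pow, haux, mul_one]
  have hzr1 : z ^ (r + 1) = 1 := by
    have h2 : (r + 1) / 2 * 2 = r + 1 := by
      obtain ⟨u, hu⟩ := hrodd; omega
    rw [← h2, pow_mul, hzhalf, ← pow_mul]
    exact Even.neg_one_pow ⟨(r + 1) / 2, by ring⟩
  have h1z : 1 + z ≠ 0 := by
    intro h
    apply hne
    have hz1 : z = -1 := by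
      have := eq_neg_of_add_eq_zero_right h
      simpa using this
    rw [hzdef] at hz1
    have : δ ^ n * (δ ^ m)⁻¹ = 1 := neg_inj.mp hz1
    field_simp at this
    exact this
  rw [hfac, mul_pow, one_add_circle_pow hr3 hrodd hF σ hσ hzr1 h1z, hzhalf,
    neg_one_pow_inv hr3 hrodd hF]
  have hδq : δ ^ (Fintype.card F / 2) = 1 := by
    rw [card_div_two_eq hr3 hrodd hF, mul_comm, pow_mul, hδ, one_pow]
  rw [neg_eq_neg_one_mul (δ ^ m), mul_pow, ← pow_mul, mul_comm m _, pow_mul, hδq, one_pow,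
    mul_one, Even.neg_one_pow (even_card_div_two hr3 hrodd hF), one_mul]

end FieldLemmas2

section ZetaProd

variable {F : Type*} [Field F] [DecidableEq F]

lemma prod_coset_poly (ζ : Fˣ) {f : ℕ} [NeZero f] (hζ : orderOf ζ = f) (c : Fˣ) :
    (X ^ f - C (((c : Fˣ) : F) ^ f) : F[X])
      = ∏ x : ZMod f, (X - C ((c : F) * (ζ : F) ^ (x.val))) := by
  have hf : 0 < f := Nat.pos_of_ne_zero (NeZero.ne f)
  set R : ZMod f → F := fun x => (c : F) * (ζ : F) ^ (x.val) with hR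
  have hRu : ∀ x : ZMod f, R x = ((c * ζ ^ x.val : Fˣ) : F) := by
    intro x; rw [hR]; push_cast; ring
  have hRinj : Function.Injective R := by
    intro x y hxy
    rw [hRu, hRu] at hxy
    have h1 : c * ζ ^ x.val = c * ζ ^ y.val := Units.ext hxy
    have h2 : ζ ^ x.val = ζ ^ y.val := mul_left_cancel h1
    have h3 : x.val ≡ y.val [MOD f] := by

      have := pow_eq_pow_iff_modEq.mp h2
      rwa [hζ] at this
    exact ZMod.val_injective f
      (Nat.ModEq.eq_of_lt_of_lt h3 (ZMod.val_lt x) (ZMod.val_lt y))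
  have hroot : ∀ x : ZMod f, (R x) ^ f = ((c : F)) ^ f := by
    intro x
    rw [hR]
    simp only
    rw [mul_pow, ← pow_mul, mul_comm (x.val) f, pow_mul]
    have : (ζ : F) ^ f = 1 := by
      have hu : ζ ^ f = 1 := by rw [← hζ]; exact pow_orderOf_eq_one ζ
      have := congrArg (Units.val) hu
      rwa [Units.val_pow_eq_pow_val, Units.val_one] at this
    rw [this, one_pow, mul_one]
  set P : F[X] := X ^ f - C (((c : F)) ^ f) with hP
  set Q : F[X] := ∏ x : ZMod f, (X - C (R x)) with hQ
  have hPm : P.Monic := monic_X_pow_sub_C _ hf.ne'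
  have hQm : Q.Monic := monic_prod_of_monic _ _ fun i _ => monic_X_sub_C (R i)
  have hPdeg : P.natDegree = f := natDegree_X_pow_sub_C
  have hQdeg : Q.natDegree = f := by
    rw [hQ, natDegree_prod_of_monic _ _ fun i _ => monic_X_sub_C (R i)]
    simp [Polynomial.natDegree_X_sub_C, ZMod.card]
  have heval : ∀ x : ZMod f, (P - Q).eval (R x) = 0 := by
    intro x
    rw [Polynomial.eval_sub]
    have hPe : P.eval (R x) = 0 := by
      rw [hP]
      simp [hroot x]
    have hQe : Q.eval (R x) = 0 := by
      rw [hQ, Polynomial.eval_prod]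
      exact Finset.prod_eq_zero (mem_univ x) (by simp)
    rw [hPe, hQe, sub_zero]
  have hPQ : P - Q = 0 := by
    rcases eq_or_ne (P - Q) 0 with h | h
    · exact h
    · refine Polynomial.eq_zero_of_natDegree_lt_card_of_eval_eq_zero _ hRinj heval ?_
      have hdlt : (P - Q).degree < P.degree :=
        Polynomial.degree_sub_lt (by
          rw [Polynomial.degree_eq_natDegree hPm.ne_zero,
            Polynomial.degree_eq_natDegree hQm.ne_zero, hPdeg, hQdeg])
          hPm.ne_zero (by rw [hPm.leadingCoeff, hQm.leadingCoeff])
      rw [Polynomial.degree_eq_natDegree hPm.ne_zero, hPdeg] at hdlt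
      have := (Polynomial.natDegree_lt_iff_degree_lt h).mpr hdlt
      rwa [ZMod.card]
  exact sub_eq_zero.mp hPQ

lemma prod_coset_eval (ζ : Fˣ) {f : ℕ} [NeZero f] (hζ : orderOf ζ = f) (c : Fˣ) (z : F) :
    ∏ x : ZMod f, (z - (c : F) * (ζ : F) ^ (x.val)) = z ^ f - ((c : F)) ^ f := by
  have := congrArg (Polynomial.eval z) (prod_coset_poly ζ hζ c)
  rw [Polynomial.eval_prod] at this
  simp only [Polynomial.eval_sub, Polynomial.eval_pow, Polynomial.eval_X, Polynomial.eval_C]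
    at this
  exact this.symm

lemma prod_one_sub_zeta (ζ : Fˣ) {f : ℕ} [NeZero f] (hζ : orderOf ζ = f) :
    ∏ x ∈ (univ : Finset (ZMod f)).erase 0, (1 - (ζ : F) ^ (x.val)) = (f : F) := by
  have hf : 0 < f := Nat.pos_of_ne_zero (NeZero.ne f)
  have hpoly := prod_coset_poly ζ hζ 1
  simp only [Units.val_one, one_pow, one_mul] at hpoly
  set G : F[X] := ∏ x ∈ (univ : Finset (ZMod f)).erase 0, (X - C ((ζ : F) ^ (x.val))) with hG
  have hsplit : (X - C 1) * G = X ^ f - C 1 := by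
    rw [hpoly, ← Finset.mul_prod_erase univ _ (mem_univ (0 : ZMod f))]
    congr 1
    rw [ZMod.val_zero, pow_zero]
  have hgeom : (X - C 1) * (∑ i ∈ range f, (X : F[X]) ^ i) = X ^ f - C 1 := by
    rw [Polynomial.C_1]
    have := geom_sum_mul (X : F[X]) f
    rw [mul_comm] at this
    exact this
  have hXC : (X - C 1 : F[X]) ≠ 0 := Polynomial.X_sub_C_ne_zero 1
  have hGg : G = ∑ i ∈ range f, (X : F[X]) ^ i := by
    apply mul_left_cancel₀ hXC
    rw [hsplit, hgeom]
  have := congrArg (Polynomial.eval 1) hGg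
  rw [Polynomial.eval_prod, Polynomial.eval_finset_sum] at this
  simp only [Polynomial.eval_sub, Polynomial.eval_X, Polynomial.eval_C,
    Polynomial.eval_pow, one_pow] at this
  rw [this]
  simp

lemma prod_coset_erase (ζ : Fˣ) {f : ℕ} [NeZero f] (hζ : orderOf ζ = f) (c : Fˣ) (m : ZMod f) :
    ∏ x ∈ (univ : Finset (ZMod f)).erase m,
        ((c : F) * (ζ : F) ^ (m.val) - (c : F) * (ζ : F) ^ (x.val))
      = (f : F) * ((c : F) * (ζ : F) ^ (m.val)) ^ (f - 1) := by
  have hf : 0 < f := Nat.pos_of_ne_zero (NeZero.ne f)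
  have hζpow : ∀ d : ZMod f, (ζ : F) ^ ((m + d).val) = (ζ : F) ^ (m.val) * (ζ : F) ^ (d.val) := by
    intro d
    have hu : ζ ^ ((m + d).val) = ζ ^ (m.val + d.val) := by
      rw [pow_eq_pow_iff_modEq, hζ, ZMod.val_add]
      exact Nat.mod_modEq _ _
    have := congrArg (Units.val) hu
    rw [Units.val_pow_eq_pow_val, Units.val_pow_eq_pow_val] at this
    rw [this, pow_add]
  have hbij : ∏ x ∈ (univ : Finset (ZMod f)).erase m,
      ((c : F) * (ζ : F) ^ (m.val) - (c : F) * (ζ : F) ^ (x.val))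
    = ∏ d ∈ (univ : Finset (ZMod f)).erase 0,
      ((c : F) * (ζ : F) ^ (m.val) - (c : F) * (ζ : F) ^ ((m + d).val)) := by
    refine (Finset.prod_bij (fun d _ => m + d) ?_ ?_ ?_ ?_).symm
    · intro d hd
      rw [Finset.mem_erase] at hd ⊢
      refine ⟨?_, mem_univ _⟩
      intro h
      exact hd.1 (by
        have := congrArg (fun w => w - m) h
        simpa using this)
    · intro x hx y hy hxy
      have := congrArg (fun w => w - m) hxy
      simpa using this
    · intro x hx
      rw [Finset.mem_erase] at hx
      refine ⟨x - m, ?_, by ring⟩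
      rw [Finset.mem_erase]
      exact ⟨by intro h; exact hx.1 (by rwa [sub_eq_zero] at h), mem_univ _⟩
    · intro d hd; rfl
  rw [hbij]
  have hcongr : ∀ d ∈ (univ : Finset (ZMod f)).erase 0,
      (c : F) * (ζ : F) ^ (m.val) - (c : F) * (ζ : F) ^ ((m + d).val)
      = ((c : F) * (ζ : F) ^ (m.val)) * (1 - (ζ : F) ^ (d.val)) := by
    intro d _
    rw [hζpow d]; ring
  rw [Finset.prod_congr rfl hcongr, Finset.prod_mul_distrib, prod_one_sub_zeta ζ hζ]
  have hcarderase : ((univ : Finset (ZMod f)).erase 0).card = f - 1 := by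
    rw [Finset.card_erase_of_mem (mem_univ _)]
    simp [ZMod.card]
  rw [Finset.prod_const, hcarderase, mul_comm]

end ZetaProd
end MDSAux

namespace MDSAux
open Polynomial Finset
set_option linter.unusedSectionVars false

section Helpers

variable {F : Type*} [Field F] [Fintype F] [DecidableEq F]
variable {r : ℕ}

lemma isSquare_prod {β : Type*} (s : Finset β) (f : β → F)
    (h : ∀ i ∈ s, IsSquare (f i)) : IsSquare (∏ i ∈ s, f i) := by
  classical
  induction s using Finset.induction_on with
  | empty => simp
  | @insert a s ha ih =>
    rw [Finset.prod_insert ha]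
    exact (h a (mem_insert_self a s)).mul
      (ih fun i hi => h i (mem_insert_of_mem hi))

variable (hr3 : 3 ≤ r) (hrodd : Odd r) (hF : Fintype.card F = r ^ 2)

include hr3 hrodd hF in
lemma isSquare_of_circle {x : F} (hx : x ^ ((r + 1) / 2) = 1) : IsSquare x := by
  have hx0 : x ≠ 0 := by
    intro h; rw [h, zero_pow (by omega)] at hx; exact zero_ne_one hx
  rw [FiniteField.isSquare_iff (char_ne_two hr3 hrodd hF) hx0, card_div_two_eq hr3 hrodd hF,
    pow_mul', hx, one_pow]

include hr3 hrodd hF in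
lemma isSquare_pow_of_rfix (σ : F →+* F) (hσ : ∀ x : F, σ x = x ^ r)
    {x : F} (hx : x ^ (r - 1) = 1) (n : ℕ) : IsSquare (x ^ n) := by
  have : (x ^ n) ^ (r - 1) = 1 := by
    rw [← pow_mul, mul_comm, pow_mul, hx, one_pow]
  exact isSquare_of_rpow hr3 hrodd hF _ this

lemma prod_ite_erase {β : Type*} [Fintype β] [DecidableEq β] (x0 : β) (h : β → F) :
    ∏ y, (if y = x0 then 1 else h y) = ∏ y ∈ univ.erase x0, h y := by
  rw [← Finset.prod_erase (univ : Finset β) (f := fun y => if y = x0 then 1 else h y)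
    (if_pos rfl)]
  exact Finset.prod_congr rfl fun y hy => if_neg (Finset.ne_of_mem_erase hy)

end Helpers

section Points

variable {F : Type*} [Field F]

/-- The evaluation points. -/
def pointMap (α : Fˣ) (e1 e2 e1h : ℕ) {s t f1 f2 : ℕ} [NeZero f1] [NeZero f2] :
    (Fin s × ZMod f1) ⊕ ((Fin t × ZMod f2) ⊕ Unit) → F
  | .inl (i, x) => ((α ^ (e2 * i.val + e1 * x.val) : Fˣ) : F)
  | .inr (.inl (j, y)) => ((α ^ (e1 * j.val + e1h + e2 * y.val) : Fˣ) : F)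
  | .inr (.inr _) => 0

variable [Fintype F] [DecidableEq F]
variable {r e1 f1 e2 f2 s t e1h : ℕ} [NeZero f1] [NeZero f2] {α : Fˣ}
variable (hr3 : 3 ≤ r) (hrodd : Odd r)
  (hord : orderOf α = r ^ 2 - 1)
  (hN1 : r ^ 2 - 1 = e1 * f1) (hN2 : r ^ 2 - 1 = e2 * f2)
  (hdL1 : ∀ k : ℤ, (e1 : ℤ) ∣ e2 * k → |k| < s → k = 0)
  (hdL2 : ∀ k : ℤ, (e2 : ℤ) ∣ e1 * k → |k| < t → k = 0)
  (hcross : ∀ k k' : ℤ, ¬ ((r ^ 2 - 1 : ℕ) : ℤ) ∣ (e2 * k + e1 * k' + e1h))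

include hr3 hN1 in
lemma Npos : 0 < r ^ 2 - 1 := by
  have h9 : 3 ^ 2 ≤ r ^ 2 := Nat.pow_le_pow_left hr3 2
  omega

include hr3 hrodd hord hN1 hN2 hdL1 hdL2 hcross in
lemma pointMap_injective : Function.Injective (pointMap (s := s) (t := t) (f1 := f1) (f2 := f2) α e1 e2 e1h) := by
  have hNpos := Npos hr3 hN1
  have key : ∀ m n : ℕ, α ^ m = α ^ n → ((r ^ 2 - 1 : ℕ) : ℤ) ∣ (n : ℤ) - (m : ℤ) := by
    intro m n hmn
    have := pow_eq_pow_iff_modEq.mp hmn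
    rw [hord] at this
    exact this.dvd
  intro w1 w2 heq
  rcases w1 with ⟨i1, x1⟩ | (⟨j1, y1⟩ | u1) <;> rcases w2 with ⟨i2, x2⟩ | (⟨j2, y2⟩ | u2)
  · -- A1 vs A1
    simp only [pointMap] at heq
    have hu : α ^ (e2 * i1.val + e1 * x1.val) = α ^ (e2 * i2.val + e1 * x2.val) :=
      Units.ext heq
    have hdvd := key _ _ hu
    have he1N : (e1 : ℤ) ∣ ((r ^ 2 - 1 : ℕ) : ℤ) := by
      exact_mod_cast Int.natCast_dvd_natCast.mpr ⟨f1, hN1⟩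
    have h1 : (e1 : ℤ) ∣ e2 * ((i2 : ℤ) - (i1 : ℤ)) := by
      have h2 : (e1 : ℤ) ∣ (e2 * i2.val + e1 * x2.val : ℤ) - (e2 * i1.val + e1 * x1.val : ℤ) :=
        dvd_trans he1N (by exact_mod_cast hdvd)
      have h3 : (e2 * i2.val + e1 * x2.val : ℤ) - (e2 * i1.val + e1 * x1.val : ℤ)
          = e2 * ((i2 : ℤ) - i1) + e1 * ((x2.val : ℤ) - x1.val) := by push_cast; ring
      rw [h3] at h2
      have := (dvd_add_right (Dvd.intro _ rfl)).mp (by rwa [add_comm] at h2)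
      exact this
    have hii : (i2 : ℤ) - (i1 : ℤ) = 0 := by
      refine hdL1 _ h1 ?_
      have := i1.2; have := i2.2
      rw [abs_sub_lt_iff]
      omega
    have hi : i1 = i2 := by
      have h1v : (i1 : ℤ) = i2 := by omega
      exact Fin.ext (by exact_mod_cast h1v)
    subst hi
    have h4 : ((r ^ 2 - 1 : ℕ) : ℤ) ∣ e1 * ((x2.val : ℤ) - x1.val) := by
      have h3 : (e2 * i1.val + e1 * x2.val : ℤ) - (e2 * i1.val + e1 * x1.val : ℤ)
          = e1 * ((x2.val : ℤ) - x1.val) := by push_cast; ring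
      rw [← h3]
      exact_mod_cast hdvd
    have h5 : (f1 : ℤ) ∣ ((x2.val : ℤ) - x1.val) := by
      have hNe : ((r ^ 2 - 1 : ℕ) : ℤ) = (e1 : ℤ) * f1 := by exact_mod_cast hN1
      rw [hNe] at h4
      have he1pos : (0 : ℤ) < e1 := by
        have : 0 < e1 := by
          rcases Nat.eq_zero_or_pos e1 with h | h
          · exfalso; rw [h] at hN1; omega
          · exact h
        exact_mod_cast this
      exact (mul_dvd_mul_iff_left he1pos.ne').mp h4
    have hxx : (x2.val : ℤ) - x1.val = 0 := by
      refine int_eq_zero_of_dvd_of_abs_lt h5 ?_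
      have := ZMod.val_lt x1; have := ZMod.val_lt x2
      rw [abs_sub_lt_iff]
      omega
    have hx : x1 = x2 := ZMod.val_injective f1 (by omega)
    rw [hx]
  · -- A1 vs A2 : contradiction
    exfalso
    simp only [pointMap] at heq
    have hu : α ^ (e2 * i1.val + e1 * x1.val) = α ^ (e1 * j2.val + e1h + e2 * y2.val) :=
      Units.ext heq
    have hdvd := key _ _ hu
    refine hcross ((y2.val : ℤ) - i1.val) ((j2.val : ℤ) - x1.val) ?_
    have h3 : ((e1 * j2.val + e1h + e2 * y2.val : ℕ) : ℤ) - ((e2 * i1.val + e1 * x1.val : ℕ) : ℤ)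
        = e2 * ((y2.val : ℤ) - i1.val) + e1 * ((j2.val : ℤ) - x1.val) + e1h := by
      push_cast; ring
    rw [← h3]
    exact_mod_cast hdvd
  · -- A1 vs 0
    exfalso
    simp only [pointMap] at heq
    exact (α ^ (e2 * i1.val + e1 * x1.val)).ne_zero heq
  · -- A2 vs A1
    exfalso
    simp only [pointMap] at heq
    have hu : α ^ (e2 * i2.val + e1 * x2.val) = α ^ (e1 * j1.val + e1h + e2 * y1.val) :=
      (Units.ext heq).symm
    have hdvd := key _ _ hu
    refine hcross ((y1.val : ℤ) - i2.val) ((j1.val : ℤ) - x2.val) ?_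
    have h3 : ((e1 * j1.val + e1h + e2 * y1.val : ℕ) : ℤ) - ((e2 * i2.val + e1 * x2.val : ℕ) : ℤ)
        = e2 * ((y1.val : ℤ) - i2.val) + e1 * ((j1.val : ℤ) - x2.val) + e1h := by
      push_cast; ring
    rw [← h3]
    exact_mod_cast hdvd
  · -- A2 vs A2
    simp only [pointMap] at heq
    have hu : α ^ (e1 * j1.val + e1h + e2 * y1.val) = α ^ (e1 * j2.val + e1h + e2 * y2.val) :=
      Units.ext heq
    have hdvd := key _ _ hu
    have he2N : (e2 : ℤ) ∣ ((r ^ 2 - 1 : ℕ) : ℤ) := by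
      exact_mod_cast Int.natCast_dvd_natCast.mpr ⟨f2, hN2⟩
    have h1 : (e2 : ℤ) ∣ e1 * ((j2 : ℤ) - (j1 : ℤ)) := by
      have h2 : (e2 : ℤ) ∣ ((e1 * j2.val + e1h + e2 * y2.val : ℕ) : ℤ)
          - ((e1 * j1.val + e1h + e2 * y1.val : ℕ) : ℤ) :=
        dvd_trans he2N (by exact_mod_cast hdvd)
      have h3 : ((e1 * j2.val + e1h + e2 * y2.val : ℕ) : ℤ)
          - ((e1 * j1.val + e1h + e2 * y1.val : ℕ) : ℤ)
          = e1 * ((j2 : ℤ) - j1) + e2 * ((y2.val : ℤ) - y1.val) := by push_cast; ring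
      rw [h3] at h2
      exact (dvd_add_right (Dvd.intro _ rfl)).mp (by rwa [add_comm] at h2)
    have hjj : (j2 : ℤ) - (j1 : ℤ) = 0 := by
      refine hdL2 _ h1 ?_
      have := j1.2; have := j2.2
      rw [abs_sub_lt_iff]
      omega
    have hj : j1 = j2 := by
      have h1v : (j1 : ℤ) = j2 := by omega
      exact Fin.ext (by exact_mod_cast h1v)
    subst hj
    have h4 : ((r ^ 2 - 1 : ℕ) : ℤ) ∣ e2 * ((y2.val : ℤ) - y1.val) := by
      have h3 : ((e1 * j1.val + e1h + e2 * y2.val : ℕ) : ℤ)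
          - ((e1 * j1.val + e1h + e2 * y1.val : ℕ) : ℤ)
          = e2 * ((y2.val : ℤ) - y1.val) := by push_cast; ring
      rw [← h3]
      exact_mod_cast hdvd
    have h5 : (f2 : ℤ) ∣ ((y2.val : ℤ) - y1.val) := by
      have hNe : ((r ^ 2 - 1 : ℕ) : ℤ) = (e2 : ℤ) * f2 := by exact_mod_cast hN2
      rw [hNe] at h4
      have he2pos : (0 : ℤ) < e2 := by
        have : 0 < e2 := by
          rcases Nat.eq_zero_or_pos e2 with h | h
          · exfalso; rw [h] at hN2; have := Npos hr3 hN1; omega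
          · exact h
        exact_mod_cast this
      exact (mul_dvd_mul_iff_left he2pos.ne').mp h4
    have hyy : (y2.val : ℤ) - y1.val = 0 := by
      refine int_eq_zero_of_dvd_of_abs_lt h5 ?_
      have := ZMod.val_lt y1; have := ZMod.val_lt y2
      rw [abs_sub_lt_iff]
      omega
    have hy : y1 = y2 := ZMod.val_injective f2 (by omega)
    rw [hy]
  · -- A2 vs 0
    exfalso
    simp only [pointMap] at heq
    exact (α ^ (e1 * j1.val + e1h + e2 * y1.val)).ne_zero heq
  · -- 0 vs A1
    exfalso
    simp only [pointMap] at heq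
    exact (α ^ (e2 * i2.val + e1 * x2.val)).ne_zero heq.symm
  · -- 0 vs A2
    exfalso
    simp only [pointMap] at heq
    exact (α ^ (e1 * j2.val + e1h + e2 * y2.val)).ne_zero heq.symm
  · -- 0 vs 0
    rfl

end Points
end MDSAux

namespace MDSAux
open Polynomial Finset
set_option linter.unusedSectionVars false
set_option maxHeartbeats 1000000

section Squares

variable {F : Type*} [Field F] [Fintype F] [DecidableEq F]
variable {r e1 f1 e2 f2 s t e1h : ℕ} [NeZero f1] [NeZero f2] {α : Fˣ}
variable (hr3 : 3 ≤ r) (hrodd : Odd r) (hF : Fintype.card F = r ^ 2)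
  (σ : F →+* F) (hσ : ∀ x : F, σ x = x ^ r)
  (hord : orderOf α = r ^ 2 - 1)
  (hN1 : r ^ 2 - 1 = e1 * f1) (hN2 : r ^ 2 - 1 = e2 * f2)
  (he1h : e1 = 2 * e1h) (he1hpos : 0 < e1h)
  (hd1 : (r ^ 2 - 1) ∣ e2 * f1 * ((r + 1) / 2))
  (hd2 : (r ^ 2 - 1) ∣ e1h * f2 * (r - 1))
  (hdL1 : ∀ k : ℤ, (e1 : ℤ) ∣ e2 * k → |k| < s → k = 0)
  (hpar : Even (((r + 1) / 2) * (s - 1)))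
  (hf1F : (f1 : F) ≠ 0) (hf2F : (f2 : F) ≠ 0)
  (hinj : Function.Injective (pointMap (s := s) (t := t) (f1 := f1) (f2 := f2) α e1 e2 e1h))

-- abbreviations (not section variables, to keep defeq transparent)
local notation "P" => pointMap (s := s) (t := t) (f1 := f1) (f2 := f2) α e1 e2 e1h
local notation "κT" => ((Fin s × ZMod f1) ⊕ ((Fin t × ZMod f2) ⊕ Unit))
local notation "δc" => ((α ^ (e2 * f1) : Fˣ) : F)
local notation "νc" => ((α ^ (e1h * f2) : Fˣ) : F)

include hord hN1 in
lemma alpha_e1f1 : α ^ (e1 * f1) = 1 := by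
  rw [← hN1, ← hord]; exact pow_orderOf_eq_one α

include hord hN2 in
lemma alpha_e2f2 : α ^ (e2 * f2) = 1 := by
  rw [← hN2, ← hord]; exact pow_orderOf_eq_one α

include hord hd1 in
lemma delta_half : δc ^ ((r + 1) / 2) = 1 := by
  rw [← Units.val_pow_eq_pow_val, ← pow_mul]
  have : α ^ (e2 * f1 * ((r + 1) / 2)) = 1 := orderOf_dvd_iff_pow_eq_one.mp (hord ▸ hd1)
  rw [this, Units.val_one]

include hord hd2 in
lemma nu_fix : νc ^ (r - 1) = 1 := by
  rw [← Units.val_pow_eq_pow_val, ← pow_mul]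
  have : α ^ (e1h * f2 * (r - 1)) = 1 := orderOf_dvd_iff_pow_eq_one.mp (hord ▸ hd2)
  rw [this, Units.val_one]

include hr3 hord hN1 hN2 hdL1 in
lemma delta_inj {i i' : Fin s} (hne : i ≠ i') : δc ^ (i.val) ≠ δc ^ (i'.val) := by
  intro heq
  have hNpos := Npos hr3 hN1
  have hcast : ∀ m : ℕ, δc ^ m = ((α ^ (e2 * f1 * m) : Fˣ) : F) := fun m => by
    rw [← Units.val_pow_eq_pow_val, ← pow_mul]
  have hu : α ^ (e2 * f1 * i.val) = α ^ (e2 * f1 * i'.val) := by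
    apply Units.ext
    rw [show ((α ^ (e2 * f1 * i.val) : Fˣ) : F) = δc ^ (i.val) from (hcast i.val).symm,
      show ((α ^ (e2 * f1 * i'.val) : Fˣ) : F) = δc ^ (i'.val) from (hcast i'.val).symm]
    exact heq
  have hmod := pow_eq_pow_iff_modEq.mp hu
  rw [hord] at hmod
  have hdvd := hmod.dvd
  have hf1pos : 0 < f1 := Nat.pos_of_ne_zero (NeZero.ne f1)
  have h1 : (e1 : ℤ) ∣ e2 * ((i'.val : ℤ) - i.val) := by
    have hNe : ((r ^ 2 - 1 : ℕ) : ℤ) = (f1 : ℤ) * e1 := by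
      rw [hN1]; push_cast; ring
    rw [hNe] at hdvd
    have h2 : ((e2 * f1 * i'.val : ℕ) : ℤ) - ((e2 * f1 * i.val : ℕ) : ℤ)
        = (f1 : ℤ) * (e2 * ((i'.val : ℤ) - i.val)) := by push_cast; ring
    rw [h2] at hdvd
    exact (mul_dvd_mul_iff_left (by exact_mod_cast hf1pos.ne' : (f1 : ℤ) ≠ 0)).mp hdvd
  have := hdL1 _ h1 (by
    have := i.2; have := i'.2
    rw [abs_sub_lt_iff]
    omega)
  apply hne
  have : (i.val : ℤ) = i'.val := by omega
  exact Fin.ext (by exact_mod_cast this)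

include hr3 hord hN1 he1h he1hpos in
lemma alpha_half : ((α ^ (e1h * f1) : Fˣ) : F) = -1 := by
  have hNpos := Npos hr3 hN1
  have hsq : ((α ^ (e1h * f1) : Fˣ) : F) * ((α ^ (e1h * f1) : Fˣ) : F) = 1 := by
    rw [← Units.val_mul, ← pow_add]
    have : e1h * f1 + e1h * f1 = e1 * f1 := by rw [he1h]; ring
    rw [this, alpha_e1f1 hord hN1, Units.val_one]
  rcases mul_self_eq_one_iff.mp hsq with h1 | h1
  · exfalso
    have hu : α ^ (e1h * f1) = 1 := Units.ext (by rwa [Units.val_one])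
    have := orderOf_dvd_iff_pow_eq_one.mpr hu
    rw [hord] at this
    have hle := Nat.le_of_dvd (by
      have hf1pos : 0 < f1 := Nat.pos_of_ne_zero (NeZero.ne f1)
      positivity) this
    have : e1h * f1 + e1h * f1 = e1 * f1 := by rw [he1h]; ring
    have hf1pos : 0 < f1 := Nat.pos_of_ne_zero (NeZero.ne f1)
    nlinarith [hle, hN1]
  · exact h1

-- point powers
include hord hN1 hN2 in
lemma pointA1_pow_f1 (i : Fin s) (x : ZMod f1) :
    (P (.inl (i, x))) ^ f1 = δc ^ (i.val) := by
  show (((α ^ (e2 * i.val + e1 * x.val) : Fˣ) : F)) ^ f1 = _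
  rw [← Units.val_pow_eq_pow_val, ← pow_mul,
    show (e2 * i.val + e1 * x.val) * f1 = e2 * f1 * i.val + e1 * f1 * x.val from by ring,
    pow_add, pow_mul (α) (e1 * f1), alpha_e1f1 hord hN1, one_pow, mul_one, pow_mul,
    Units.val_pow_eq_pow_val]

include hord hN1 hN2 he1h in
lemma pointA1_pow_f2 (i : Fin s) (x : ZMod f1) :
    (P (.inl (i, x))) ^ f2 = νc ^ (2 * x.val) := by
  show (((α ^ (e2 * i.val + e1 * x.val) : Fˣ) : F)) ^ f2 = _
  rw [← Units.val_pow_eq_pow_val, ← pow_mul,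
    show (e2 * i.val + e1 * x.val) * f2 = e2 * f2 * i.val + e1h * f2 * (2 * x.val) from by
      rw [he1h]; ring,
    pow_add, pow_mul (α) (e2 * f2), alpha_e2f2 hord hN2, one_pow, one_mul, pow_mul,
    Units.val_pow_eq_pow_val]

include hr3 hord hN1 hN2 he1h he1hpos in
lemma pointA2_pow_f1 (j : Fin t) (y : ZMod f2) :
    (P (.inr (.inl (j, y)))) ^ f1 = -(δc ^ (y.val)) := by
  show (((α ^ (e1 * j.val + e1h + e2 * y.val) : Fˣ) : F)) ^ f1 = _
  rw [← Units.val_pow_eq_pow_val, ← pow_mul,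
    show (e1 * j.val + e1h + e2 * y.val) * f1
      = e1 * f1 * j.val + e1h * f1 + e2 * f1 * y.val from by ring,
    pow_add, pow_add, pow_mul (α) (e1 * f1), alpha_e1f1 hord hN1, one_pow, one_mul,
    Units.val_mul, alpha_half hr3 hord hN1 he1h he1hpos, pow_mul,
    Units.val_pow_eq_pow_val]
  ring

include hord hN1 hN2 he1h in
lemma pointA2_pow_f2 (j : Fin t) (y : ZMod f2) :
    (P (.inr (.inl (j, y)))) ^ f2 = νc ^ (2 * j.val + 1) := by
  show (((α ^ (e1 * j.val + e1h + e2 * y.val) : Fˣ) : F)) ^ f2 = _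
  rw [← Units.val_pow_eq_pow_val, ← pow_mul,
    show (e1 * j.val + e1h + e2 * y.val) * f2
      = e2 * f2 * y.val + e1h * f2 * (2 * j.val + 1) from by rw [he1h]; ring,
    pow_add, pow_mul (α) (e2 * f2), alpha_e2f2 hord hN2, one_pow, one_mul, pow_mul,
    Units.val_pow_eq_pow_val]

-- order of ζ's
include hr3 hord hN1 in
lemma order_zeta1 : orderOf (α ^ e1) = f1 := by
  have hNpos := Npos hr3 hN1
  rw [orderOf_pow, hord, hN1, Nat.gcd_comm, Nat.gcd_eq_left ⟨f1, rfl⟩]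
  have he1pos : 0 < e1 := by
    rcases Nat.eq_zero_or_pos e1 with h | h
    · exfalso; rw [h] at hN1; omega
    · exact h
  exact Nat.mul_div_cancel_left f1 he1pos

include hr3 hord hN1 hN2 in
lemma order_zeta2 : orderOf (α ^ e2) = f2 := by
  have hNpos := Npos hr3 hN1
  rw [orderOf_pow, hord, hN2, Nat.gcd_comm, Nat.gcd_eq_left ⟨f2, rfl⟩]
  have he2pos : 0 < e2 := by
    rcases Nat.eq_zero_or_pos e2 with h | h
    · exfalso; rw [h] at hN2; omega
    · exact h
  exact Nat.mul_div_cancel_left f2 he2pos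

-- block products
include hr3 hord hN1 hN2 in
lemma block1_prod (i : Fin s) (z : F) :
    ∏ x : ZMod f1, (z - P (.inl (i, x))) = z ^ f1 - δc ^ (i.val) := by
  have hpt : ∀ x : ZMod f1,
      P (.inl (i, x)) = ((α ^ (e2 * i.val) : Fˣ) : F) * ((α ^ e1 : Fˣ) : F) ^ (x.val) := by
    intro x
    show ((α ^ (e2 * i.val + e1 * x.val) : Fˣ) : F) = _
    rw [pow_add, pow_mul α e1 x.val, Units.val_mul]
    simp only [Units.val_pow_eq_pow_val]
  calc ∏ x : ZMod f1, (z - P (.inl (i, x)))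
      = ∏ x : ZMod f1, (z - ((α ^ (e2 * i.val) : Fˣ) : F) * ((α ^ e1 : Fˣ) : F) ^ (x.val)) :=
        Finset.prod_congr rfl fun x _ => by rw [hpt x]
    _ = z ^ f1 - ((α ^ (e2 * i.val) : Fˣ) : F) ^ f1 :=
        prod_coset_eval (α ^ e1) (order_zeta1 hr3 hord hN1) (α ^ (e2 * i.val)) z
    _ = z ^ f1 - δc ^ (i.val) := by
        rw [← Units.val_pow_eq_pow_val, ← pow_mul,
          show e2 * i.val * f1 = e2 * f1 * i.val from by ring, pow_mul,
          Units.val_pow_eq_pow_val]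

include hr3 hord hN1 hN2 he1h in
lemma block2_prod (j : Fin t) (z : F) :
    ∏ y : ZMod f2, (z - P (.inr (.inl (j, y)))) = z ^ f2 - νc ^ (2 * j.val + 1) := by
  have hpt : ∀ y : ZMod f2,
      P (.inr (.inl (j, y)))
        = ((α ^ (e1 * j.val + e1h) : Fˣ) : F) * ((α ^ e2 : Fˣ) : F) ^ (y.val) := by
    intro y
    show ((α ^ (e1 * j.val + e1h + e2 * y.val) : Fˣ) : F) = _
    rw [show e1 * j.val + e1h + e2 * y.val = (e1 * j.val + e1h) + e2 * y.val from by ring,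
      pow_add, pow_mul α e2 y.val, Units.val_mul]
    simp only [Units.val_pow_eq_pow_val]
  calc ∏ y : ZMod f2, (z - P (.inr (.inl (j, y))))
      = ∏ y : ZMod f2,
          (z - ((α ^ (e1 * j.val + e1h) : Fˣ) : F) * ((α ^ e2 : Fˣ) : F) ^ (y.val)) :=
        Finset.prod_congr rfl fun y _ => by rw [hpt y]
    _ = z ^ f2 - ((α ^ (e1 * j.val + e1h) : Fˣ) : F) ^ f2 :=
        prod_coset_eval (α ^ e2) (order_zeta2 hr3 hord hN1 hN2) _ z
    _ = z ^ f2 - νc ^ (2 * j.val + 1) := by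
        rw [← Units.val_pow_eq_pow_val, ← pow_mul,
          show (e1 * j.val + e1h) * f2 = e2 * f2 * 0 + e1h * f2 * (2 * j.val + 1) from by
            rw [he1h]; ring,
          pow_add, pow_mul (α) (e2 * f2), alpha_e2f2 hord hN2, one_pow, one_mul, pow_mul,
          Units.val_pow_eq_pow_val]

include hr3 hord hN1 hN2 in
lemma block1_erase_prod (i : Fin s) (x0 : ZMod f1) :
    ∏ x ∈ (univ : Finset (ZMod f1)).erase x0, (P (.inl (i, x0)) - P (.inl (i, x)))
      = (f1 : F) * (P (.inl (i, x0))) ^ (f1 - 1) := by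
  have hpt : ∀ x : ZMod f1,
      P (.inl (i, x)) = ((α ^ (e2 * i.val) : Fˣ) : F) * ((α ^ e1 : Fˣ) : F) ^ (x.val) := by
    intro x
    show ((α ^ (e2 * i.val + e1 * x.val) : Fˣ) : F) = _
    rw [pow_add, pow_mul α e1 x.val, Units.val_mul]
    simp only [Units.val_pow_eq_pow_val]
  calc ∏ x ∈ (univ : Finset (ZMod f1)).erase x0, (P (.inl (i, x0)) - P (.inl (i, x)))
      = ∏ x ∈ (univ : Finset (ZMod f1)).erase x0,
          (((α ^ (e2 * i.val) : Fˣ) : F) * ((α ^ e1 : Fˣ) : F) ^ (x0.val)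
            - ((α ^ (e2 * i.val) : Fˣ) : F) * ((α ^ e1 : Fˣ) : F) ^ (x.val)) :=
        Finset.prod_congr rfl fun x _ => by rw [hpt x, hpt x0]
    _ = (f1 : F) * (((α ^ (e2 * i.val) : Fˣ) : F) * ((α ^ e1 : Fˣ) : F) ^ (x0.val)) ^ (f1 - 1) :=
        prod_coset_erase (α ^ e1) (order_zeta1 hr3 hord hN1) (α ^ (e2 * i.val)) x0
    _ = (f1 : F) * (P (.inl (i, x0))) ^ (f1 - 1) := by rw [← hpt x0]

include hr3 hord hN1 hN2 he1h in
lemma block2_erase_prod (j : Fin t) (y0 : ZMod f2) :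
    ∏ y ∈ (univ : Finset (ZMod f2)).erase y0,
        (P (.inr (.inl (j, y0))) - P (.inr (.inl (j, y))))
      = (f2 : F) * (P (.inr (.inl (j, y0)))) ^ (f2 - 1) := by
  have hpt : ∀ y : ZMod f2,
      P (.inr (.inl (j, y)))
        = ((α ^ (e1 * j.val + e1h) : Fˣ) : F) * ((α ^ e2 : Fˣ) : F) ^ (y.val) := by
    intro y
    show ((α ^ (e1 * j.val + e1h + e2 * y.val) : Fˣ) : F) = _
    rw [show e1 * j.val + e1h + e2 * y.val = (e1 * j.val + e1h) + e2 * y.val from by ring,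
      pow_add, pow_mul α e2 y.val, Units.val_mul]
    simp only [Units.val_pow_eq_pow_val]
  calc ∏ y ∈ (univ : Finset (ZMod f2)).erase y0,
        (P (.inr (.inl (j, y0))) - P (.inr (.inl (j, y))))
      = ∏ y ∈ (univ : Finset (ZMod f2)).erase y0,
          (((α ^ (e1 * j.val + e1h) : Fˣ) : F) * ((α ^ e2 : Fˣ) : F) ^ (y0.val)
            - ((α ^ (e1 * j.val + e1h) : Fˣ) : F) * ((α ^ e2 : Fˣ) : F) ^ (y.val)) :=
        Finset.prod_congr rfl fun y _ => by rw [hpt y, hpt y0]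
    _ = (f2 : F) * (((α ^ (e1 * j.val + e1h) : Fˣ) : F)
          * ((α ^ e2 : Fˣ) : F) ^ (y0.val)) ^ (f2 - 1) :=
        prod_coset_erase (α ^ e2) (order_zeta2 hr3 hord hN1 hN2) _ y0
    _ = (f2 : F) * (P (.inr (.inl (j, y0)))) ^ (f2 - 1) := by rw [← hpt y0]

end Squares
end MDSAux

namespace MDSAux
open Polynomial Finset
set_option linter.unusedSectionVars false
set_option maxHeartbeats 1000000

section Squares2

variable {F : Type*} [Field F] [Fintype F] [DecidableEq F]
variable {r e1 f1 e2 f2 s t e1h : ℕ} [NeZero f1] [NeZero f2] {α : Fˣ}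
variable (hr3 : 3 ≤ r) (hrodd : Odd r) (hF : Fintype.card F = r ^ 2)
  (σ : F →+* F) (hσ : ∀ x : F, σ x = x ^ r)
  (hord : orderOf α = r ^ 2 - 1)
  (hN1 : r ^ 2 - 1 = e1 * f1) (hN2 : r ^ 2 - 1 = e2 * f2)
  (he1h : e1 = 2 * e1h) (he1hpos : 0 < e1h)
  (hd1 : (r ^ 2 - 1) ∣ e2 * f1 * ((r + 1) / 2))
  (hd2 : (r ^ 2 - 1) ∣ e1h * f2 * (r - 1))
  (hdL1 : ∀ k : ℤ, (e1 : ℤ) ∣ e2 * k → |k| < s → k = 0)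
  (hpar : Even (((r + 1) / 2) * (s - 1)))
  (hf1F : (f1 : F) ≠ 0) (hf2F : (f2 : F) ≠ 0)
  (hinj : Function.Injective (pointMap (s := s) (t := t) (f1 := f1) (f2 := f2) α e1 e2 e1h))

local notation "P" => pointMap (s := s) (t := t) (f1 := f1) (f2 := f2) α e1 e2 e1h
local notation "κT" => ((Fin s × ZMod f1) ⊕ ((Fin t × ZMod f2) ⊕ Unit))
local notation "δc" => ((α ^ (e2 * f1) : Fˣ) : F)
local notation "νc" => ((α ^ (e1h * f2) : Fˣ) : F)

lemma split_U (x0 : κT) :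
    ∏ y ∈ (univ : Finset κT).erase x0, (P x0 - P y)
    = (∏ p : Fin s × ZMod f1,
          (if (Sum.inl p : κT) = x0 then 1 else (P x0 - P (Sum.inl p))))
      * ((∏ p : Fin t × ZMod f2,
            (if (Sum.inr (Sum.inl p) : κT) = x0 then 1
              else (P x0 - P (Sum.inr (Sum.inl p)))))
        * (if (Sum.inr (Sum.inr ()) : κT) = x0 then 1 else P x0)) := by
  rw [← prod_ite_erase x0 (fun y => P x0 - P y), Fintype.prod_sum_type,
    Fintype.prod_sum_type]
  congr 2
  have : ∀ u : Unit, (if (Sum.inr (Sum.inr u) : κT) = x0 then 1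
      else (P x0 - P (Sum.inr (Sum.inr u))))
      = (if (Sum.inr (Sum.inr ()) : κT) = x0 then 1 else P x0) := by
    intro u
    have h0 : P (Sum.inr (Sum.inr u)) = 0 := rfl
    rw [h0, sub_zero]
  rw [Finset.prod_congr rfl (fun u _ => this u)]
  simp

include hr3 hrodd hF hord hd1 in
lemma delta_pow_isSquare (m : ℕ) : IsSquare (δc ^ m) := by
  apply isSquare_of_circle hr3 hrodd hF
  rw [pow_right_comm, delta_half hord hd1, one_pow]

include hr3 hrodd hF σ hσ hord hd2 in
lemma nu_pow_isSquare (m : ℕ) : IsSquare (νc ^ m) :=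
  isSquare_pow_of_rfix hr3 hrodd hF σ hσ (nu_fix hord hd2) m

include hr3 hord hd2 in
lemma nu_pow_fix (m : ℕ) : (νc ^ m) ^ r = νc ^ m := by
  have h1 : (νc ^ m) ^ (r - 1) = 1 := by
    rw [pow_right_comm, nu_fix hord hd2, one_pow]
  calc (νc ^ m) ^ r = (νc ^ m) ^ (r - 1) * (νc ^ m) := by
        rw [← pow_succ, show r - 1 + 1 = r from by omega]
    _ = νc ^ m := by rw [h1, one_mul]

include hr3 hrodd hF σ hσ hord hN1 hN2 he1h he1hpos hd1 hd2 hdL1 hpar hf1F hf2F hinj in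
lemma case_zero : IsSquare (∏ y ∈ (univ : Finset κT).erase (Sum.inr (Sum.inr ())),
    (P (Sum.inr (Sum.inr ())) - P y)) := by
  rw [split_U]
  rw [if_pos rfl]
  have hz : P (Sum.inr (Sum.inr ())) = (0 : F) := rfl
  have hb1 : (∏ p : Fin s × ZMod f1,
      (if (Sum.inl p : κT) = Sum.inr (Sum.inr ()) then 1
        else (P (Sum.inr (Sum.inr ())) - P (Sum.inl p))))
      = ∏ i : Fin s, (-(δc ^ (i.val))) := by
    rw [Finset.prod_congr rfl (fun p _ => if_neg (by simp))]
    rw [Fintype.prod_prod_type]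
    refine Finset.prod_congr rfl fun i _ => ?_
    rw [show (∏ y : ZMod f1, (P (Sum.inr (Sum.inr ())) - P (Sum.inl (i, y))))
        = (0 : F) ^ f1 - δc ^ (i.val) from by
      rw [← block1_prod hr3 hord hN1 hN2 i 0]
      exact Finset.prod_congr rfl fun y _ => by rw [hz]]
    rw [zero_pow (NeZero.ne f1), zero_sub]
  have hb2 : (∏ p : Fin t × ZMod f2,
      (if (Sum.inr (Sum.inl p) : κT) = Sum.inr (Sum.inr ()) then 1
        else (P (Sum.inr (Sum.inr ())) - P (Sum.inr (Sum.inl p)))))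
      = ∏ j : Fin t, (-(νc ^ (2 * j.val + 1))) := by
    rw [Finset.prod_congr rfl (fun p _ => if_neg (by simp))]
    rw [Fintype.prod_prod_type]
    refine Finset.prod_congr rfl fun j _ => ?_
    rw [show (∏ y : ZMod f2, (P (Sum.inr (Sum.inr ())) - P (Sum.inr (Sum.inl (j, y)))))
        = (0 : F) ^ f2 - νc ^ (2 * j.val + 1) from by
      rw [← block2_prod hr3 hord hN1 hN2 he1h j 0]
      exact Finset.prod_congr rfl fun y _ => by rw [hz]]
    rw [zero_pow (NeZero.ne f2), zero_sub]
  rw [hb1, hb2, mul_one]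
  refine IsSquare.mul ?_ ?_
  · refine isSquare_prod _ _ fun i _ => ?_
    rw [neg_eq_neg_one_mul]
    exact (isSquare_neg_one' hr3 hrodd hF).mul (delta_pow_isSquare hr3 hrodd hF hord hd1 _)
  · refine isSquare_prod _ _ fun j _ => ?_
    rw [neg_eq_neg_one_mul]
    exact (isSquare_neg_one' hr3 hrodd hF).mul
      (nu_pow_isSquare hr3 hrodd hF σ hσ hord hd2 _)

end Squares2
end MDSAux

namespace MDSAux
open Polynomial Finset
set_option linter.unusedSectionVars false
set_option maxHeartbeats 1000000

section Squares3

variable {F : Type*} [Field F] [Fintype F] [DecidableEq F]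
variable {r e1 f1 e2 f2 s t e1h : ℕ} [NeZero f1] [NeZero f2] {α : Fˣ}
variable (hr3 : 3 ≤ r) (hrodd : Odd r) (hF : Fintype.card F = r ^ 2)
  (σ : F →+* F) (hσ : ∀ x : F, σ x = x ^ r)
  (hord : orderOf α = r ^ 2 - 1)
  (hN1 : r ^ 2 - 1 = e1 * f1) (hN2 : r ^ 2 - 1 = e2 * f2)
  (he1h : e1 = 2 * e1h) (he1hpos : 0 < e1h)
  (hd1 : (r ^ 2 - 1) ∣ e2 * f1 * ((r + 1) / 2))
  (hd2 : (r ^ 2 - 1) ∣ e1h * f2 * (r - 1))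
  (hdL1 : ∀ k : ℤ, (e1 : ℤ) ∣ e2 * k → |k| < s → k = 0)
  (hpar : Even (((r + 1) / 2) * (s - 1)))
  (hf1F : (f1 : F) ≠ 0) (hf2F : (f2 : F) ≠ 0)
  (hinj : Function.Injective (pointMap (s := s) (t := t) (f1 := f1) (f2 := f2) α e1 e2 e1h))

local notation "P" => pointMap (s := s) (t := t) (f1 := f1) (f2 := f2) α e1 e2 e1h
local notation "κT" => ((Fin s × ZMod f1) ⊕ ((Fin t × ZMod f2) ⊕ Unit))
local notation "δc" => ((α ^ (e2 * f1) : Fˣ) : F)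
local notation "νc" => ((α ^ (e1h * f2) : Fˣ) : F)

include hinj in
lemma point_sub_ne {w w' : κT} (hww : w' ≠ w) : P w - P w' ≠ 0 :=
  sub_ne_zero.mpr fun h => hww (hinj h).symm

include hr3 hrodd hF σ hσ hord hN1 hN2 he1h he1hpos hd1 hd2 hdL1 hpar hf1F hf2F hinj in
lemma case_A1 (i0 : Fin s) (x0r : ZMod f1) :
    IsSquare (∏ y ∈ (univ : Finset κT).erase (Sum.inl (i0, x0r)),
      (P (Sum.inl (i0, x0r)) - P y)) := by
  have hf1pos : 0 < f1 := Nat.pos_of_ne_zero (NeZero.ne f1)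
  rw [split_U]
  rw [if_neg (by simp)]
  -- T2
  have hT2 : (∏ p : Fin t × ZMod f2,
      (if (Sum.inr (Sum.inl p) : κT) = Sum.inl (i0, x0r) then 1
        else (P (Sum.inl (i0, x0r)) - P (Sum.inr (Sum.inl p)))))
      = ∏ j : Fin t, (νc ^ (2 * x0r.val) - νc ^ (2 * j.val + 1)) := by
    rw [Finset.prod_congr rfl (fun p _ => if_neg (by simp))]
    rw [Fintype.prod_prod_type]
    refine Finset.prod_congr rfl fun j _ => ?_
    rw [block2_prod hr3 hord hN1 hN2 he1h j _, pointA1_pow_f2 hord hN1 hN2 he1h i0 x0r]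
  have hT2ne : ∀ j : Fin t, νc ^ (2 * x0r.val) - νc ^ (2 * j.val + 1) ≠ 0 := by
    intro j
    rw [← pointA1_pow_f2 hord hN1 hN2 he1h i0 x0r, ← block2_prod hr3 hord hN1 hN2 he1h j _]
    rw [Finset.prod_ne_zero_iff]
    intro y _
    exact point_sub_ne hinj (by simp)
  have hT2sq : IsSquare (∏ j : Fin t, (νc ^ (2 * x0r.val) - νc ^ (2 * j.val + 1))) := by
    refine isSquare_prod _ _ fun j _ => ?_
    refine isSquare_sub_of_fixed hr3 hrodd hF σ hσ (nu_pow_fix hr3 hord hd2 _)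
      (nu_pow_fix hr3 hord hd2 _) ?_
    intro h
    exact hT2ne j (by rw [h, sub_self])
  -- T1
  have hT1 : (∏ p : Fin s × ZMod f1,
      (if (Sum.inl p : κT) = Sum.inl (i0, x0r) then 1
        else (P (Sum.inl (i0, x0r)) - P (Sum.inl p))))
      = ((f1 : F) * (P (Sum.inl (i0, x0r))) ^ (f1 - 1))
        * ∏ i ∈ (univ : Finset (Fin s)).erase i0, (δc ^ (i0.val) - δc ^ (i.val)) := by
    simp only [Sum.inl.injEq]
    rw [Fintype.prod_prod_type]
    rw [← Finset.mul_prod_erase univ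
      (fun i => ∏ x : ZMod f1, (if (i, x) = (i0, x0r) then 1
        else (P (Sum.inl (i0, x0r)) - P (Sum.inl (i, x))))) (mem_univ i0)]
    congr 1
    · -- i0 term
      have h5 : (∏ x : ZMod f1, (if (i0, x) = (i0, x0r) then 1
          else (P (Sum.inl (i0, x0r)) - P (Sum.inl (i0, x)))))
          = ∏ x : ZMod f1, (if x = x0r then 1
          else (P (Sum.inl (i0, x0r)) - P (Sum.inl (i0, x)))) := by
        refine Finset.prod_congr rfl fun x _ => ?_
        by_cases hx : x = x0r
        · rw [if_pos (by rw [hx]), if_pos hx]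
        · rw [if_neg (by simp [hx]), if_neg hx]
      rw [h5, prod_ite_erase x0r (fun x => P (Sum.inl (i0, x0r)) - P (Sum.inl (i0, x)))]
      exact block1_erase_prod hr3 hord hN1 hN2 i0 x0r
    · refine Finset.prod_congr rfl fun i hi => ?_
      have hine : i ≠ i0 := Finset.ne_of_mem_erase hi
      rw [Finset.prod_congr rfl (fun x _ => if_neg (by
        intro h
        exact hine (congrArg Prod.fst h)))]
      rw [block1_prod hr3 hord hN1 hN2 i _, pointA1_pow_f1 hord hN1 hN2 i0 x0r]
  -- Pi square
  have hPine : (∏ i ∈ (univ : Finset (Fin s)).erase i0, (δc ^ (i0.val) - δc ^ (i.val))) ≠ 0 := by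
    rw [Finset.prod_ne_zero_iff]
    intro i hi
    exact sub_ne_zero.mpr
      (delta_inj hr3 hord hN1 hN2 hdL1 (Finset.ne_of_mem_erase hi).symm)
  have hPipow : (∏ i ∈ (univ : Finset (Fin s)).erase i0, (δc ^ (i0.val) - δc ^ (i.val)))
      ^ (Fintype.card F / 2) = 1 := by
    rw [← Finset.prod_pow]
    rw [Finset.prod_congr rfl (fun i hi =>
      circle_diff_pow hr3 hrodd hF σ hσ (delta_half hord hd1)
        (delta_inj hr3 hord hN1 hN2 hdL1 (Finset.ne_of_mem_erase hi).symm))]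
    rw [Finset.prod_const, Finset.card_erase_of_mem (mem_univ i0), Finset.card_univ,
      Fintype.card_fin, ← pow_mul]
    exact Even.neg_one_pow hpar
  have hPisq : IsSquare
      (∏ i ∈ (univ : Finset (Fin s)).erase i0, (δc ^ (i0.val) - δc ^ (i.val))) :=
    (FiniteField.isSquare_iff (char_ne_two hr3 hrodd hF) hPine).mpr hPipow
  rw [hT1, hT2]
  have hre : ((f1 : F) * (P (Sum.inl (i0, x0r))) ^ (f1 - 1)
        * ∏ i ∈ (univ : Finset (Fin s)).erase i0, (δc ^ (i0.val) - δc ^ (i.val)))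
      * ((∏ j : Fin t, (νc ^ (2 * x0r.val) - νc ^ (2 * j.val + 1)))
        * (P (Sum.inl (i0, x0r))))
      = ((f1 : F) * ((P (Sum.inl (i0, x0r))) ^ (f1 - 1) * (P (Sum.inl (i0, x0r)))))
        * ((∏ i ∈ (univ : Finset (Fin s)).erase i0, (δc ^ (i0.val) - δc ^ (i.val)))
          * ∏ j : Fin t, (νc ^ (2 * x0r.val) - νc ^ (2 * j.val + 1))) := by ring
  rw [hre, ← pow_succ, show f1 - 1 + 1 = f1 from by omega,
    pointA1_pow_f1 hord hN1 hN2 i0 x0r]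
  exact ((isSquare_natCast hr3 hrodd hF σ hσ f1 hf1F).mul
    (delta_pow_isSquare hr3 hrodd hF hord hd1 _)).mul (hPisq.mul hT2sq)

include hr3 hrodd hF σ hσ hord hN1 hN2 he1h he1hpos hd1 hd2 hdL1 hpar hf1F hf2F hinj in
lemma case_A2 (j0 : Fin t) (y0r : ZMod f2) :
    IsSquare (∏ y ∈ (univ : Finset κT).erase (Sum.inr (Sum.inl (j0, y0r))),
      (P (Sum.inr (Sum.inl (j0, y0r))) - P y)) := by
  have hf2pos : 0 < f2 := Nat.pos_of_ne_zero (NeZero.ne f2)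
  rw [split_U]
  rw [if_neg (by simp)]
  -- T1 : block over A1
  have hT1 : (∏ p : Fin s × ZMod f1,
      (if (Sum.inl p : κT) = Sum.inr (Sum.inl (j0, y0r)) then 1
        else (P (Sum.inr (Sum.inl (j0, y0r))) - P (Sum.inl p))))
      = ∏ i : Fin s, (-(δc ^ (y0r.val)) - δc ^ (i.val)) := by
    rw [Finset.prod_congr rfl (fun p _ => if_neg (by simp))]
    rw [Fintype.prod_prod_type]
    refine Finset.prod_congr rfl fun i _ => ?_
    rw [block1_prod hr3 hord hN1 hN2 i _, pointA2_pow_f1 hr3 hord hN1 hN2 he1h he1hpos j0 y0r]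
  have hT1ne : ∀ i : Fin s, -(δc ^ (y0r.val)) - δc ^ (i.val) ≠ 0 := by
    intro i
    rw [← pointA2_pow_f1 hr3 hord hN1 hN2 he1h he1hpos j0 y0r,
      ← block1_prod hr3 hord hN1 hN2 i _]
    rw [Finset.prod_ne_zero_iff]
    intro x _
    exact point_sub_ne hinj (by simp)
  have hT1sq : IsSquare (∏ i : Fin s, (-(δc ^ (y0r.val)) - δc ^ (i.val))) := by
    refine isSquare_prod _ _ fun i _ => ?_
    have he : -(δc ^ (y0r.val)) - δc ^ (i.val) = (-1) * (δc ^ (y0r.val) + δc ^ (i.val)) := by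
      ring
    rw [he]
    refine (isSquare_neg_one' hr3 hrodd hF).mul ?_
    have hne : δc ^ (y0r.val) + δc ^ (i.val) ≠ 0 := by
      intro h
      exact hT1ne i (by rw [show -(δc ^ (y0r.val)) - δc ^ (i.val)
        = -(δc ^ (y0r.val) + δc ^ (i.val)) from by ring, h, neg_zero])
    exact (FiniteField.isSquare_iff (char_ne_two hr3 hrodd hF) hne).mpr
      (circle_sum_pow hr3 hrodd hF σ hσ (delta_half hord hd1) hne)
  -- T2 : own block
  have hT2 : (∏ p : Fin t × ZMod f2,
      (if (Sum.inr (Sum.inl p) : κT) = Sum.inr (Sum.inl (j0, y0r)) then 1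
        else (P (Sum.inr (Sum.inl (j0, y0r))) - P (Sum.inr (Sum.inl p)))))
      = ((f2 : F) * (P (Sum.inr (Sum.inl (j0, y0r)))) ^ (f2 - 1))
        * ∏ j ∈ (univ : Finset (Fin t)).erase j0,
            (νc ^ (2 * j0.val + 1) - νc ^ (2 * j.val + 1)) := by
    simp only [Sum.inr.injEq, Sum.inl.injEq]
    rw [Fintype.prod_prod_type]
    rw [← Finset.mul_prod_erase univ
      (fun j => ∏ y : ZMod f2, (if (j, y) = (j0, y0r) then 1
        else (P (Sum.inr (Sum.inl (j0, y0r))) - P (Sum.inr (Sum.inl (j, y)))))) (mem_univ j0)]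
    congr 1
    · have h5 : (∏ y : ZMod f2, (if (j0, y) = (j0, y0r) then 1
          else (P (Sum.inr (Sum.inl (j0, y0r))) - P (Sum.inr (Sum.inl (j0, y))))))
          = ∏ y : ZMod f2, (if y = y0r then 1
          else (P (Sum.inr (Sum.inl (j0, y0r))) - P (Sum.inr (Sum.inl (j0, y))))) := by
        refine Finset.prod_congr rfl fun y _ => ?_
        by_cases hy : y = y0r
        · rw [if_pos (by rw [hy]), if_pos hy]
        · rw [if_neg (by simp [hy]), if_neg hy]
      rw [h5, prod_ite_erase y0r
        (fun y => P (Sum.inr (Sum.inl (j0, y0r))) - P (Sum.inr (Sum.inl (j0, y))))]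
      exact block2_erase_prod hr3 hord hN1 hN2 he1h j0 y0r
    · refine Finset.prod_congr rfl fun j hj => ?_
      have hjne : j ≠ j0 := Finset.ne_of_mem_erase hj
      rw [Finset.prod_congr rfl (fun y _ => if_neg (by
        intro h
        exact hjne (congrArg Prod.fst h)))]
      rw [block2_prod hr3 hord hN1 hN2 he1h j _,
        pointA2_pow_f2 hord hN1 hN2 he1h j0 y0r]
  have hT2ne : ∀ j : Fin t, j ≠ j0 → νc ^ (2 * j0.val + 1) - νc ^ (2 * j.val + 1) ≠ 0 := by
    intro j hj
    rw [← pointA2_pow_f2 hord hN1 hN2 he1h j0 y0r, ← block2_prod hr3 hord hN1 hN2 he1h j _]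
    rw [Finset.prod_ne_zero_iff]
    intro y _
    refine point_sub_ne hinj ?_
    intro h
    rw [Sum.inr.injEq, Sum.inl.injEq] at h
    exact hj (congrArg Prod.fst h)
  have hT2sq : IsSquare (∏ j ∈ (univ : Finset (Fin t)).erase j0,
      (νc ^ (2 * j0.val + 1) - νc ^ (2 * j.val + 1))) := by
    refine isSquare_prod _ _ fun j hj => ?_
    refine isSquare_sub_of_fixed hr3 hrodd hF σ hσ (nu_pow_fix hr3 hord hd2 _)
      (nu_pow_fix hr3 hord hd2 _) ?_
    intro h
    exact hT2ne j (Finset.ne_of_mem_erase hj) (by rw [h, sub_self])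
  rw [hT1, hT2]
  have hre : (∏ i : Fin s, (-(δc ^ (y0r.val)) - δc ^ (i.val)))
      * ((((f2 : F) * (P (Sum.inr (Sum.inl (j0, y0r)))) ^ (f2 - 1))
        * ∏ j ∈ (univ : Finset (Fin t)).erase j0,
            (νc ^ (2 * j0.val + 1) - νc ^ (2 * j.val + 1)))
        * (P (Sum.inr (Sum.inl (j0, y0r)))))
      = ((f2 : F) * ((P (Sum.inr (Sum.inl (j0, y0r)))) ^ (f2 - 1)
          * (P (Sum.inr (Sum.inl (j0, y0r))))))
        * ((∏ i : Fin s, (-(δc ^ (y0r.val)) - δc ^ (i.val)))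
          * ∏ j ∈ (univ : Finset (Fin t)).erase j0,
              (νc ^ (2 * j0.val + 1) - νc ^ (2 * j.val + 1))) := by ring
  rw [hre, ← pow_succ, show f2 - 1 + 1 = f2 from by omega,
    pointA2_pow_f2 hord hN1 hN2 he1h j0 y0r]
  exact ((isSquare_natCast hr3 hrodd hF σ hσ f2 hf2F).mul
    (nu_pow_isSquare hr3 hrodd hF σ hσ hord hd2 _)).mul (hT1sq.mul hT2sq)

include hr3 hrodd hF σ hσ hord hN1 hN2 he1h he1hpos hd1 hd2 hdL1 hpar hf1F hf2F hinj in
lemma pointMap_neg_uCoef_isSquare (x0 : κT) :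
    IsSquare (- uCoef (fun y : κT => P y) x0) := by
  have hU : IsSquare (∏ y ∈ (univ : Finset κT).erase x0, (P x0 - P y)) := by
    rcases x0 with ⟨i0, x0r⟩ | (⟨j0, y0r⟩ | u)
    · exact case_A1 hr3 hrodd hF σ hσ hord hN1 hN2 he1h he1hpos hd1 hd2 hdL1 hpar
        hf1F hf2F hinj i0 x0r
    · exact case_A2 hr3 hrodd hF σ hσ hord hN1 hN2 he1h he1hpos hd1 hd2 hdL1 hpar
        hf1F hf2F hinj j0 y0r
    · exact case_zero hr3 hrodd hF σ hσ hord hN1 hN2 he1h he1hpos hd1 hd2 hdL1 hpar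
        hf1F hf2F hinj
  have huc : uCoef (fun y : κT => P y) x0
      = (∏ y ∈ (univ : Finset κT).erase x0, (P x0 - P y))⁻¹ := rfl
  rw [huc, neg_eq_neg_one_mul]
  refine (isSquare_neg_one' hr3 hrodd hF).mul ?_
  obtain ⟨w, hw⟩ := hU
  exact ⟨w⁻¹, by rw [hw, mul_inv]⟩

end Squares3
end MDSAux

namespace MDSAux
open Finset
set_option linter.unusedSectionVars false

section Transport

variable {F : Type*} [Field F] [DecidableEq F]
variable {ι ι' : Type*} [Fintype ι] [Fintype ι'] [DecidableEq ι] [DecidableEq ι']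

/-- Reindexing linear equivalence. -/
noncomputable def reindexLE (e : ι' ≃ ι) : (ι → F) ≃ₗ[F] (ι' → F) :=
  LinearEquiv.funCongrLeft F F e

lemma reindexLE_apply (e : ι' ≃ ι) (g : ι → F) (i' : ι') : reindexLE e g i' = g (e i') := rfl

lemma hammingNorm_reindex (e : ι' ≃ ι) (x : ι → F) :
    hammingNorm (reindexLE e x) = hammingNorm x := by
  show (univ.filter fun i' : ι' => reindexLE e x i' ≠ 0).card
    = (univ.filter fun i : ι => x i ≠ 0).card
  rw [Finset.card_filter, Finset.card_filter]
  exact Fintype.sum_equiv e _ _ fun i' => rfl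

lemma reindexLE_eq_zero_iff (e : ι' ≃ ι) (x : ι → F) : reindexLE e x = 0 ↔ x = 0 :=
  map_eq_zero_iff _ (reindexLE e).injective

lemma dualCode'_map (e : ι' ≃ ι) (C : Submodule F (ι → F)) :
    dualCode' (Submodule.map (reindexLE (F := F) e).toLinearMap C)
      = Submodule.map (reindexLE (F := F) e).toLinearMap (dualCode' C) := by
  ext x
  constructor
  · intro hx
    refine ⟨fun i => x (e.symm i), ?_, ?_⟩
    · intro c0 hc0
      have h1 := hx (reindexLE e c0) ⟨c0, hc0, rfl⟩
      calc ∑ i, x (e.symm i) * c0 i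
          = ∑ i', x (e.symm (e i')) * c0 (e i') :=
            (Fintype.sum_equiv e _ _ fun i' => rfl).symm
        _ = ∑ i', x i' * reindexLE e c0 i' := by
            refine Finset.sum_congr rfl fun i' _ => ?_
            rw [Equiv.symm_apply_apply, reindexLE_apply]
        _ = 0 := h1
    · funext i'
      show x (e.symm (e i')) = x i'
      rw [Equiv.symm_apply_apply]
  · rintro ⟨y, hy, rfl⟩ c ⟨c0, hc0, rfl⟩
    have h1 := hy c0 hc0
    calc ∑ i', reindexLE e y i' * reindexLE e c0 i'
        = ∑ i', y (e i') * c0 (e i') := rfl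
      _ = ∑ i, y i * c0 i := Fintype.sum_equiv e _ _ fun i' => rfl
      _ = 0 := h1

end Transport
end MDSAux

namespace MDSAux
open Finset
set_option linter.unusedSectionVars false
set_option maxHeartbeats 1000000

section CastNeZero
variable {F : Type*} [Field F] [Fintype F]

lemma natCast_ne_zero_of_dvd_card_sub_one {n : ℕ} (hn : n ∣ Fintype.card F - 1)
    (hpos : 0 < n) : (n : F) ≠ 0 := by
  intro h0
  have hcp : CharP F (ringChar F) := ringChar.charP F
  have hcdvd : ringChar F ∣ n := (CharP.cast_eq_zero_iff F (ringChar F) n).mp h0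
  have hcprime : (ringChar F).Prime := CharP.char_is_prime F (ringChar F)
  obtain ⟨k, -, hcard⟩ := FiniteField.card F (ringChar F)
  have h1 : ringChar F ∣ Fintype.card F := by
    rw [hcard]; exact dvd_pow_self (ringChar F) k.2.ne'
  have h2 : ringChar F ∣ Fintype.card F - 1 := dvd_trans hcdvd hn
  have h3 := Nat.dvd_sub h1 h2
  have hc2 := hcprime.two_le
  have hcardpos : 0 < Fintype.card F := Fintype.card_pos
  have hd1 : Fintype.card F - (Fintype.card F - 1) = 1 := by omega
  rw [hd1] at h3
  have := Nat.le_of_dvd one_pos h3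
  omega

end CastNeZero
end MDSAux

/-- Theorem 3.2(3): if `n₁ = s·f₁ + t·f₂` is even, there is a `q`-ary MDS self-dual code
of length `n₁ + 2`, where `q = r²`. -/
theorem mds_self_dual_of_even_length_add_two
    (r e1 f1 e2 f2 s t l : ℕ)
    (hr_odd : Odd r) (hr_pp : IsPrimePow r)
    (hq1 : r ^ 2 - 1 = e1 * f1) (hq2 : r ^ 2 - 1 = e2 * f2)
    (hl : 2 ≤ l) (he1 : e1 % 2 ^ (l + 1) = 2 ^ l) (he2 : 2 ^ l ∣ e2)
    (hdvd1 : 2 * e2 ∣ e1 * (r - 1)) (hdvd2 : e1 ∣ e2 * (r + 1))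
    (hs1 : 1 ≤ s) (hs2 : s ≤ e1 / Nat.gcd e1 e2)
    (ht1 : 1 ≤ t) (ht2 : t ≤ e2 / Nat.gcd e1 e2)
    (h4 : 4 ∣ (s - 1) * (r + 1))
    (hn1 : Even (s * f1 + t * f2))
    (F : Type*) [Field F] [Fintype F] [DecidableEq F]
    (hF : Fintype.card F = r ^ 2) :
    ∃ C : Submodule F (Fin (s * f1 + t * f2 + 2) → F),
      dualCode C = C ∧
      Module.finrank F C = (s * f1 + t * f2 + 2) / 2 ∧
      IsMinDist C ((s * f1 + t * f2 + 2) / 2 + 1) := by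
  classical
  open MDSAux in
  have hr2 : 2 ≤ r := hr_pp.two_le
  have hr3 : 3 ≤ r := by
    obtain ⟨u, hu⟩ := hr_odd; omega
  have hq9 : 9 ≤ r ^ 2 := by
    calc (9 : ℕ) = 3 ^ 2 := by norm_num
    _ ≤ r ^ 2 := Nat.pow_le_pow_left hr3 2
  have hNpos : 0 < r ^ 2 - 1 := by omega
  have hf1pos : 0 < f1 := by
    rcases Nat.eq_zero_or_pos f1 with h | h
    · rw [h, mul_zero] at hq1; omega
    · exact h
  have hf2pos : 0 < f2 := by
    rcases Nat.eq_zero_or_pos f2 with h | h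
    · rw [h, mul_zero] at hq2; omega
    · exact h
  have he1pos : 0 < e1 := by
    rcases Nat.eq_zero_or_pos e1 with h | h
    · rw [h, zero_mul] at hq1; omega
    · exact h
  have he2pos : 0 < e2 := by
    rcases Nat.eq_zero_or_pos e2 with h | h
    · rw [h, zero_mul] at hq2; omega
    · exact h
  haveI : NeZero f1 := ⟨hf1pos.ne'⟩
  haveI : NeZero f2 := ⟨hf2pos.ne'⟩
  -- decompose e1 = 2^l * m1 with m1 odd
  have h2l1 : (2 : ℕ) ^ (l + 1) = 2 ^ l * 2 := pow_succ 2 l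
  have hdm := Nat.div_add_mod e1 (2 ^ (l + 1))
  set q1 := e1 / 2 ^ (l + 1) with hq1def
  have hm1 : e1 = 2 ^ l * (2 * q1 + 1) := by
    rw [he1] at hdm
    rw [← hdm, h2l1]
    ring
  set m1 := 2 * q1 + 1 with hm1def
  have he1hpos : 0 < 2 ^ (l - 1) * m1 := by positivity
  set e1h := 2 ^ (l - 1) * m1 with he1hdef
  have h2lsplit : (2 : ℕ) ^ l = 2 * 2 ^ (l - 1) := by
    rw [← pow_succ']
    congr 1
    omega
  have he1heq : e1 = 2 * e1h := by
    rw [hm1, he1hdef, h2lsplit]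
    ring
  -- h2e1 : e2 * (r + 1) = 2 * e1 * K2
  obtain ⟨K, hK⟩ := hdvd2
  have h2lK : 2 ^ l * 2 ∣ e2 * (r + 1) := by
    refine mul_dvd_mul he2 ?_
    obtain ⟨u, hu⟩ := hr_odd
    exact ⟨u + 1, by omega⟩
  have hKeven : 2 ∣ K := by
    have h3 : 2 ^ l * 2 ∣ 2 ^ l * (m1 * K) := by
      rw [show 2 ^ l * (m1 * K) = e1 * K from by rw [hm1]; ring, ← hK]
      exact h2lK
    have h44 := (Nat.mul_dvd_mul_iff_left (pow_pos two_pos l)).mp h3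
    rcases (Nat.prime_two.dvd_mul).mp h44 with h | h
    · exfalso; omega
    · exact h
  obtain ⟨K2, hK2⟩ := hKeven
  -- rr
  have hrr2 : r + 1 = 2 * ((r + 1) / 2) := by
    obtain ⟨u, hu⟩ := hr_odd; omega
  -- hd1
  have hd1 : (r ^ 2 - 1) ∣ e2 * f1 * ((r + 1) / 2) := by
    have h5 : e2 * ((r + 1) / 2) = e1 * K2 := by
      have h6 : 2 * (e2 * ((r + 1) / 2)) = 2 * (e1 * K2) := by
        calc 2 * (e2 * ((r + 1) / 2)) = e2 * (2 * ((r + 1) / 2)) := by ring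
          _ = e2 * (r + 1) := by rw [← hrr2]
          _ = e1 * K := hK
          _ = 2 * (e1 * K2) := by rw [hK2]; ring
      exact Nat.eq_of_mul_eq_mul_left two_pos h6
    refine ⟨K2, ?_⟩
    calc e2 * f1 * ((r + 1) / 2) = (e2 * ((r + 1) / 2)) * f1 := by ring
      _ = e1 * K2 * f1 := by rw [h5]
      _ = (e1 * f1) * K2 := by ring
      _ = (r ^ 2 - 1) * K2 := by rw [← hq1]
  -- hd2
  obtain ⟨d, hd⟩ := hdvd1
  have hd2 : (r ^ 2 - 1) ∣ e1h * f2 * (r - 1) := by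
    have h7 : e1h * (r - 1) = e2 * d := by
      have h8 : 2 * (e1h * (r - 1)) = 2 * (e2 * d) := by
        calc 2 * (e1h * (r - 1)) = (2 * e1h) * (r - 1) := by ring
          _ = e1 * (r - 1) := by rw [← he1heq]
          _ = 2 * e2 * d := hd
          _ = 2 * (e2 * d) := by ring
      exact Nat.eq_of_mul_eq_mul_left two_pos h8
    refine ⟨d, ?_⟩
    calc e1h * f2 * (r - 1) = (e1h * (r - 1)) * f2 := by ring
      _ = e2 * d * f2 := by rw [h7]
      _ = (e2 * f2) * d := by ring
      _ = (r ^ 2 - 1) * d := by rw [← hq2]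
  -- hdL1 / hdL2
  have hgpos : 0 < Nat.gcd e1 e2 := Nat.gcd_pos_of_pos_left _ he1pos
  have hcop : Nat.Coprime (e1 / Nat.gcd e1 e2) (e2 / Nat.gcd e1 e2) :=
    Nat.coprime_div_gcd_div_gcd hgpos
  obtain ⟨a1, ha1⟩ := Nat.gcd_dvd_left e1 e2
  obtain ⟨a2, ha2⟩ := Nat.gcd_dvd_right e1 e2
  have ha1' : e1 / Nat.gcd e1 e2 = a1 :=
    (Nat.div_eq_iff_eq_mul_left hgpos (Nat.gcd_dvd_left e1 e2)).mpr (ha1.trans (mul_comm _ _))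
  have ha2' : e2 / Nat.gcd e1 e2 = a2 :=
    (Nat.div_eq_iff_eq_mul_left hgpos (Nat.gcd_dvd_right e1 e2)).mpr (ha2.trans (mul_comm _ _))
  have hcop' : Nat.Coprime a1 a2 := by rwa [ha1', ha2'] at hcop
  have hgZ : ((Nat.gcd e1 e2 : ℕ) : ℤ) ≠ 0 := by exact_mod_cast hgpos.ne'
  have hge1 : ((Nat.gcd e1 e2 : ℕ) : ℤ) * a1 = (e1 : ℤ) := by exact_mod_cast ha1.symm
  have hge2 : ((Nat.gcd e1 e2 : ℕ) : ℤ) * a2 = (e2 : ℤ) := by exact_mod_cast ha2.symm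
  have hdL1 : ∀ k : ℤ, (e1 : ℤ) ∣ e2 * k → |k| < s → k = 0 := by
    intro k hk hks
    have h9 : (a1 : ℤ) ∣ a2 * k := by
      have h10 : ((Nat.gcd e1 e2 : ℕ) : ℤ) * (a2 * k) = (e2 : ℤ) * k := by
        rw [← hge2]; ring
      have h10' : (e1 : ℤ) ∣ ((Nat.gcd e1 e2 : ℕ) : ℤ) * (a2 * k) := by rw [h10]; exact hk
      rw [← hge1] at h10'
      exact (mul_dvd_mul_iff_left hgZ).mp h10'
    have h11 : (a1 : ℤ) ∣ k :=
      (Nat.isCoprime_iff_coprime.mpr hcop').dvd_of_dvd_mul_left h9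
    refine int_eq_zero_of_dvd_of_abs_lt h11 (lt_of_lt_of_le hks ?_)
    have : s ≤ a1 := le_trans hs2 (le_of_eq ha1')
    exact_mod_cast this
  have hdL2 : ∀ k : ℤ, (e2 : ℤ) ∣ e1 * k → |k| < t → k = 0 := by
    intro k hk hks
    have h9 : (a2 : ℤ) ∣ a1 * k := by
      have h10 : ((Nat.gcd e1 e2 : ℕ) : ℤ) * (a1 * k) = (e1 : ℤ) * k := by
        rw [← hge1]; ring
      have h10' : (e2 : ℤ) ∣ ((Nat.gcd e1 e2 : ℕ) : ℤ) * (a1 * k) := by rw [h10]; exact hk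
      rw [← hge2] at h10'
      exact (mul_dvd_mul_iff_left hgZ).mp h10'
    have h11 : (a2 : ℤ) ∣ k :=
      (Nat.isCoprime_iff_coprime.mpr hcop'.symm).dvd_of_dvd_mul_left h9
    refine int_eq_zero_of_dvd_of_abs_lt h11 (lt_of_lt_of_le hks ?_)
    have : t ≤ a2 := le_trans ht2 (le_of_eq ha2')
    exact_mod_cast this
  -- hcross
  have h2ldvd1 : (2 : ℕ) ^ l ∣ e1 := ⟨m1, hm1⟩
  have h2lN : (2 : ℕ) ^ l ∣ r ^ 2 - 1 := dvd_trans h2ldvd1 ⟨f1, hq1⟩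
  have hcross : ∀ k k' : ℤ, ¬ ((r ^ 2 - 1 : ℕ) : ℤ) ∣ (e2 * k + e1 * k' + e1h) := by
    intro k k' hdv
    have hA : (((2 : ℕ) ^ l : ℕ) : ℤ) ∣ (e2 : ℤ) * k :=
      dvd_mul_of_dvd_left (Int.natCast_dvd_natCast.mpr he2) k
    have hB : (((2 : ℕ) ^ l : ℕ) : ℤ) ∣ (e1 : ℤ) * k' :=
      dvd_mul_of_dvd_left (Int.natCast_dvd_natCast.mpr h2ldvd1) k'
    have hC : (((2 : ℕ) ^ l : ℕ) : ℤ) ∣ (e2 * k + e1 * k' + e1h) :=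
      dvd_trans (Int.natCast_dvd_natCast.mpr h2lN) hdv
    have h12 : ((e1h : ℕ) : ℤ) = (e2 * k + e1 * k' + e1h) - e2 * k - e1 * k' := by ring
    have h13 : (((2 : ℕ) ^ l : ℕ) : ℤ) ∣ ((e1h : ℕ) : ℤ) := by
      rw [h12]
      exact (hC.sub hA).sub hB
    have h14 : (2 : ℕ) ^ l ∣ e1h := Int.natCast_dvd_natCast.mp h13
    rw [he1hdef, h2lsplit] at h14
    have h15 : 2 ^ (l - 1) * 2 ∣ 2 ^ (l - 1) * m1 := by
      rw [show 2 ^ (l - 1) * 2 = 2 * 2 ^ (l - 1) from by ring]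
      exact h14
    have h16 := (Nat.mul_dvd_mul_iff_left (pow_pos two_pos (l - 1))).mp h15
    omega
  -- hpar
  obtain ⟨m4, hm4⟩ := h4
  have hpar : Even (((r + 1) / 2) * (s - 1)) := by
    have key : 2 * (((r + 1) / 2) * (s - 1)) = 2 * (m4 + m4) := by
      calc 2 * (((r + 1) / 2) * (s - 1)) = (s - 1) * (2 * ((r + 1) / 2)) := by ring
        _ = (s - 1) * (r + 1) := by rw [← hrr2]
        _ = 4 * m4 := hm4
        _ = 2 * (m4 + m4) := by ring
    exact ⟨m4, Nat.eq_of_mul_eq_mul_left two_pos key⟩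
  -- field facts
  have hf1F : (f1 : F) ≠ 0 := by
    refine natCast_ne_zero_of_dvd_card_sub_one ?_ hf1pos
    rw [hF]
    exact ⟨e1, by rw [hq1]; ring⟩
  have hf2F : (f2 : F) ≠ 0 := by
    refine natCast_ne_zero_of_dvd_card_sub_one ?_ hf2pos
    rw [hF]
    exact ⟨e2, by rw [hq2]; ring⟩
  obtain ⟨σ, hσ⟩ := exists_frob hr_pp hF
  obtain ⟨α, hα⟩ := IsCyclic.exists_generator (α := Fˣ)
  have hord : orderOf α = r ^ 2 - 1 := by
    rw [orderOf_eq_card_of_forall_mem_zpowers hα, Nat.card_eq_fintype_card,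
      Fintype.card_units, hF]
  -- injectivity and squares
  have hinj := pointMap_injective (s := s) (t := t) (α := α) (e1h := e1h)
    hr3 hr_odd hord hq1 hq2 hdL1 hdL2 hcross
  have hsq := pointMap_neg_uCoef_isSquare hr3 hr_odd hF σ hσ hord hq1 hq2 he1heq he1hpos
    hd1 hd2 hdL1 hpar hf1F hf2F hinj
  -- cards
  have hκcard : Fintype.card ((Fin s × ZMod f1) ⊕ ((Fin t × ZMod f2) ⊕ Unit))
      = s * f1 + t * f2 + 1 := by
    simp [ZMod.card]
    ring
  obtain ⟨k0, hk0⟩ := hn1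
  have hkcard : Fintype.card ((Fin s × ZMod f1) ⊕ ((Fin t × ZMod f2) ⊕ Unit)) + 1
      = 2 * (k0 + 1) := by omega
  obtain ⟨C', hdual, hrank, hlow, hwit⟩ :=
    grs_construction (pointMap (s := s) (t := t) (f1 := f1) (f2 := f2) α e1 e2 e1h)
      hinj (k0 + 1) (by omega) hkcard hsq
  -- transport
  have hcardopt : Fintype.card (Option ((Fin s × ZMod f1) ⊕ ((Fin t × ZMod f2) ⊕ Unit)))
      = s * f1 + t * f2 + 2 := by
    rw [Fintype.card_option, hκcard]
  have e := (Fintype.equivFinOfCardEq hcardopt).symm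
  refine ⟨Submodule.map (reindexLE (F := F) e).toLinearMap C', ?_, ?_, ?_, ?_⟩
  · rw [dualCode_eq, dualCode'_map, hdual]
  · rw [LinearEquiv.finrank_map_eq, hrank]
    omega
  · rintro c ⟨c0, hc0, rfl⟩ hcne
    have h17 : hammingNorm ((reindexLE (F := F) e).toLinearMap c0) = hammingNorm c0 :=
      hammingNorm_reindex e c0
    rw [h17]
    have h18 : c0 ≠ 0 := by
      intro h
      exact hcne (by rw [h, map_zero])
    have := hlow c0 hc0 h18
    have h19 : (s * f1 + t * f2 + 2) / 2 + 1 = (k0 + 1) + 1 := by omega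
    omega
  · obtain ⟨c0, hc0, hc0ne, hc0norm⟩ := hwit
    refine ⟨(reindexLE (F := F) e).toLinearMap c0, ⟨c0, hc0, rfl⟩, ?_, ?_⟩
    · intro h
      exact hc0ne ((reindexLE_eq_zero_iff e c0).mp h)
    · rw [show hammingNorm ((reindexLE (F := F) e).toLinearMap c0) = hammingNorm c0 from
        hammingNorm_reindex e c0, hc0norm]
      omega
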